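/- arXiv:2308.11307 — 6 statements merged into one kernel-verified Lean document; each statement's English description precedes it below -/
import Mathlib

section
/- Let k ≥ 2 and let v_1 > v_2 > ... > v_k be positive integers with d = gcd(v_1, ..., v_k). Then every integer N such that d divides N and N > 2·⌊v_1/(d·k)⌋·v_2 − v_1 can be written as N = c_1·v_1 + c_2·v_2 + ... + c_k·v_k for some nonnegative integers c_1, ..., c_k. -/
/-!
Dividing by `d`, put `m = v₀ / d`. Modulo `m` the reduced weights form a set `B ∋ 0` of `k`
residues generating `ZMod m`. Hamidoune's atom argument (an atom of the Cayley digraph of `B`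
through `0` is a subgroup, which `B` escapes) gives `|S + B| ≥ |S| + |B| / 2` whenever
`S + B ≠ ZMod m`, so for `s = ⌊m / k⌋` the `s`-fold sumset of `B` covers more than half of
`ZMod m`, and every residue is a sum of `2s` reduced weights other than `m`. Such a sum is at most
`2s v₁ / d`, and adding multiples of `m` reaches every larger integer in its residue class.
-/

open Finset Pointwise

namespace Hamidoune

variable {α : Type*} [AddCommGroup α] [Fintype α] [DecidableEq α] {A A₁ A₂ B S X Y : Finset α}

/- `connectivity B` is the vertex connectivity of the Cayley digraph of `B`: the boundary
`(X + B) \ X` of a separating `X` cuts `X` off from the complement of `X + B`. It is `sInf ∅ = 0`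
when `B = univ`, where nothing separates. -/

def IsSeparating (B X : Finset α) : Prop := X.Nonempty ∧ X + B ≠ univ

noncomputable def connectivity (B : Finset α) : ℕ :=
  sInf {c | ∃ X, IsSeparating B X ∧ #(X + B) = #X + c}

def IsFragment (B X : Finset α) : Prop := IsSeparating B X ∧ #(X + B) = #X + connectivity B

def IsAtom (B A : Finset α) : Prop := IsFragment B A ∧ ∀ X, IsFragment B X → #A ≤ #X

lemma card_add_connectivity_le (hB0 : (0 : α) ∈ B) (hX : IsSeparating B X) :
    #X + connectivity B ≤ #(X + B) := by
  have hsub := card_le_card (subset_add_left X hB0)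
  have : connectivity B ≤ #(X + B) - #X := Nat.sInf_le ⟨X, hX, by omega⟩
  omega

lemma exists_isAtom (hB0 : (0 : α) ∈ B) (hB : B ≠ univ) : ∃ A, IsAtom B A := by
  classical
  have hsep : IsSeparating B {0} := ⟨singleton_nonempty 0, by rwa [singleton_add, zero_vadd]⟩
  have hfrag : ∃ X, IsFragment B X :=
    Nat.sInf_mem (s := {c | ∃ X, IsSeparating B X ∧ #(X + B) = #X + c})
      ⟨#({0} + B) - 1, {0}, hsep, by
      simp only [singleton_add, zero_vadd, card_singleton]
      have := card_pos.2 ⟨0, hB0⟩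
      omega⟩
  obtain ⟨A, hA, hmin⟩ :=
    exists_min_image (univ.filter (IsFragment B)) card (by simpa [Finset.Nonempty] using hfrag)
  exact ⟨A, (mem_filter.1 hA).2, fun Y hY ↦ hmin Y (by simpa)⟩

lemma IsSeparating.vadd (hX : IsSeparating B X) (g : α) : IsSeparating B (g +ᵥ X) :=
  ⟨hX.1.vadd_finset, by rw [vadd_add_assoc, Ne, vadd_finset_eq_univ]; exact hX.2⟩

lemma IsFragment.vadd (hX : IsFragment B X) (g : α) : IsFragment B (g +ᵥ X) :=
  ⟨hX.1.vadd g, by rw [vadd_add_assoc, card_vadd_finset, card_vadd_finset, hX.2]⟩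

lemma IsAtom.vadd (hA : IsAtom B A) (g : α) : IsAtom B (g +ᵥ A) :=
  ⟨hA.1.vadd g, fun X hX ↦ (card_vadd_finset g A).trans_le (hA.2 X hX)⟩

lemma isSeparating_neg_iff : IsSeparating (-B) (-X) ↔ IsSeparating B X := by
  rw [IsSeparating, IsSeparating, ← neg_add, neg_nonempty_iff, Ne, ← neg_inj, neg_neg, neg_univ]

lemma connectivity_neg (B : Finset α) : connectivity (-B) = connectivity B := by
  refine congrArg sInf (Set.ext fun c ↦ ⟨?_, ?_⟩)
  · rintro ⟨X, hX, hc⟩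
    refine ⟨-X, ?_, ?_⟩
    · rwa [← isSeparating_neg_iff, neg_neg]
    · rwa [← card_neg, neg_add, neg_neg, card_neg]
  · rintro ⟨X, hX, hc⟩
    exact ⟨-X, isSeparating_neg_iff.2 hX, by rwa [← neg_add, card_neg, card_neg]⟩

lemma IsFragment.neg (hX : IsFragment B X) : IsFragment (-B) (-X) :=
  ⟨isSeparating_neg_iff.2 hX.1, by rw [← neg_add, card_neg, card_neg, connectivity_neg, hX.2]⟩

lemma IsAtom.two_mul_card_add_connectivity_le (hB0 : (0 : α) ∈ B) (hA : IsAtom B A) :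
    2 * #A + connectivity B ≤ Fintype.card α := by
  -- `(A + B)ᶜ` is a fragment of `-B`, hence no smaller than the atom `A`
  set Y := (A + B)ᶜ
  have hYA : Y + -B ⊆ Aᶜ := by
    intro x hx
    obtain ⟨y, hy, _, hb, rfl⟩ := mem_add.1 hx
    obtain ⟨b, hb, rfl⟩ := mem_neg.1 hb
    exact mem_compl.2 fun hxA ↦ mem_compl.1 hy (mem_add.2 ⟨_, hxA, b, by simpa using hb, by simp⟩)
  have hAB : #(A + B) < Fintype.card α := (card_lt_iff_ne_univ _).2 hA.1.1.2
  have hY : IsSeparating (-B) Y := by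
    refine ⟨?_, fun h ↦ ?_⟩
    · rw [← card_pos, card_compl]; omega
    · obtain ⟨a, ha⟩ := hA.1.1.1
      exact mem_compl.1 (hYA (h ▸ mem_univ a)) ha
  have hgrow := card_add_connectivity_le (by simpa : (0 : α) ∈ -B) hY
  have hYA' : #(Y + -B) ≤ Fintype.card α - #A := (card_le_card hYA).trans_eq (card_compl A)
  have hYcard : #Y = Fintype.card α - #(A + B) := card_compl _
  have hAB' := hA.1.2
  rw [connectivity_neg] at hgrow
  have hYfrag : IsFragment (-B) Y := ⟨hY, by rw [connectivity_neg]; omega⟩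
  have hAY : #A ≤ #Y := (hA.2 (-Y) (by simpa using hYfrag.neg)).trans_eq (card_neg Y)
  omega

lemma IsAtom.eq_of_inter_nonempty (hB0 : (0 : α) ∈ B) (h₁ : IsAtom B A₁) (h₂ : IsAtom B A₂)
    (hI : (A₁ ∩ A₂).Nonempty) : A₁ = A₂ := by
  have hsubmod : #((A₁ ∩ A₂) + B) + #((A₁ ∪ A₂) + B) ≤ #(A₁ + B) + #(A₂ + B) := by
    rw [union_add, ← card_union_add_card_inter (A₁ + B)]
    have := card_le_card (inter_add_subset (s₁ := A₁) (s₂ := A₂) (t := B))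
    omega
  have hcard := card_union_add_card_inter A₁ A₂
  have h₁₂ := h₁.2 A₂ h₂.1
  have h₂₁ := h₂.2 A₁ h₁.1
  have hsepI : IsSeparating B (A₁ ∩ A₂) :=
    ⟨hI, fun h ↦ h₁.1.1.2 (univ_subset_iff.1 (h ▸ add_subset_add_right inter_subset_left))⟩
  have hgrowI := card_add_connectivity_le hB0 hsepI
  have hsepU : IsSeparating B (A₁ ∪ A₂) := by
    refine ⟨h₁.1.1.1.mono subset_union_left, fun h ↦ ?_⟩
    have := h₁.two_mul_card_add_connectivity_le hB0
    have := card_pos.2 hI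
    rw [h, card_univ] at hsubmod
    have := h₁.1.2
    have := h₂.1.2
    omega
  have hgrowU := card_add_connectivity_le hB0 hsepU
  have hfragI : IsFragment B (A₁ ∩ A₂) := ⟨hsepI, by have := h₁.1.2; have := h₂.1.2; omega⟩
  have hI₁ := h₁.2 _ hfragI
  have hI₂ := h₂.2 _ hfragI
  rw [← eq_of_subset_of_card_le inter_subset_left hI₁,
    eq_of_subset_of_card_le inter_subset_right hI₂]

lemma IsAtom.exists_addSubgroup (hB0 : (0 : α) ∈ B) (hA : IsAtom B A) (h0 : (0 : α) ∈ A) :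
    ∃ H : AddSubgroup α, (H : Set α) = A := by
  refine ⟨AddSubgroup.ofSub A ⟨0, h0⟩ fun x hx y hy ↦ ?_, rfl⟩
  have htrans : -y +ᵥ A = A :=
    (hA.vadd (-y)).eq_of_inter_nonempty hB0 hA
      ⟨0, mem_inter.2 ⟨mem_vadd_finset.2 ⟨y, hy, neg_add_cancel y⟩, h0⟩⟩
  rw [← htrans, add_comm]
  exact vadd_mem_vadd_finset hx

lemma card_le_two_mul_connectivity (hB0 : (0 : α) ∈ B) (hB : B ≠ univ)
    (hgen : AddSubgroup.closure (B : Set α) = ⊤) : #B ≤ 2 * connectivity B := by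
  obtain ⟨A, hA, h0⟩ : ∃ A, IsAtom B A ∧ (0 : α) ∈ A := by
    obtain ⟨A', hA'⟩ := exists_isAtom hB0 hB
    obtain ⟨a, ha⟩ := hA'.1.1.1
    exact ⟨-a +ᵥ A', hA'.vadd (-a), mem_vadd_finset.2 ⟨a, ha, neg_add_cancel a⟩⟩
  obtain ⟨H, hH⟩ := hA.exists_addSubgroup hB0 h0
  obtain ⟨b, hbB, hbA⟩ : ∃ b ∈ B, b ∉ A := by
    by_contra! hBA
    refine hA.1.1.2 (eq_univ_of_forall fun x ↦ mem_add.2 ⟨x, ?_, 0, hB0, add_zero x⟩)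
    have hle : AddSubgroup.closure (B : Set α) ≤ H :=
      (AddSubgroup.closure_le H).2 (hH ▸ fun x hx ↦ hBA x hx)
    rw [hgen, top_le_iff] at hle
    rw [← mem_coe, ← hH, hle]
    exact AddSubgroup.mem_top x
  -- `A` is a subgroup not containing `b`, so its coset `b + A` is disjoint from it
  have hdisj : Disjoint A (b +ᵥ A) := by
    refine disjoint_left.2 fun x hxA hxb ↦ hbA ?_
    obtain ⟨y, hy, rfl⟩ := mem_vadd_finset.1 hxb
    rw [← mem_coe, ← hH] at hxA hy ⊢
    simpa using H.sub_mem hxA hy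
  have hunion : A ∪ (b +ᵥ A) ⊆ A + B := union_subset (subset_add_left A hB0) fun x hx ↦ by
    obtain ⟨y, hy, rfl⟩ := mem_vadd_finset.1 hx
    exact mem_add.2 ⟨y, hy, b, hbB, add_comm y b⟩
  have h2A : 2 * #A ≤ #(A + B) := by
    have := card_le_card hunion
    rw [card_union_of_disjoint hdisj, card_vadd_finset] at this
    omega
  have hAB : #A + #B ≤ #(A + B) + #(A ∩ B) := by
    rw [← card_union_add_card_inter]
    exact Nat.add_le_add_right (card_le_card (union_subset (subset_add_left A hB0)
      (subset_add_right B h0))) _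
  have := card_le_card (inter_subset_left (s₁ := A) (s₂ := B))
  have := hA.1.2
  omega

theorem two_mul_card_add_card_le (hB0 : (0 : α) ∈ B)
    (hgen : AddSubgroup.closure (B : Set α) = ⊤) (hS : S.Nonempty) (hSB : S + B ≠ univ) :
    2 * #S + #B ≤ 2 * #(S + B) := by
  have hB : B ≠ univ := by
    rintro rfl
    exact hSB (eq_univ_of_card _ (le_antisymm (card_le_univ _) (card_le_card_add_left hS)))
  have := card_le_two_mul_connectivity hB0 hB hgen
  have := card_add_connectivity_le hB0 ⟨hS, hSB⟩
  omega

lemma add_eq_univ_of_card_lt_card_add_card (h : Fintype.card α < #X + #Y) : X + Y = univ := by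
  refine eq_univ_of_forall fun g ↦ ?_
  obtain ⟨x, hx⟩ := inter_nonempty_of_card_lt_card_add_card (subset_univ X)
    (subset_univ (g +ᵥ -Y)) (by rwa [card_vadd_finset, card_neg, card_univ])
  obtain ⟨hxX, hxY⟩ := mem_inter.1 hx
  obtain ⟨_, hy', rfl⟩ := mem_vadd_finset.1 hxY
  obtain ⟨y, hy, rfl⟩ := mem_neg.1 hy'
  exact mem_add.2 ⟨_, hxX, y, hy, by simp⟩

lemma nsmul_eq_univ_or_card_le (hB0 : (0 : α) ∈ B) (hgen : AddSubgroup.closure (B : Set α) = ⊤)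
    {t : ℕ} (ht : 1 ≤ t) : t • B = univ ∨ (t + 1) * #B ≤ 2 * #(t • B) := by
  induction t, ht using Nat.le_induction with
  | base => right; simp
  | succ t ht ih =>
    rw [succ_nsmul]
    by_cases hU : t • B + B = univ
    · exact Or.inl hU
    have htU : t • B ≠ univ := fun h ↦ hU (univ_subset_iff.1 (h ▸ subset_add_left _ hB0))
    have hstep := two_mul_card_add_card_le hB0 hgen ⟨0, zero_mem_nsmul hB0⟩ hU
    have := ih.resolve_left htU
    rw [add_one_mul]
    omega

theorem two_mul_nsmul_eq_univ (hB0 : (0 : α) ∈ B) (hgen : AddSubgroup.closure (B : Set α) = ⊤)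
    {s : ℕ} (hs : 1 ≤ s) (hcard : Fintype.card α < (s + 1) * #B) : (2 * s) • B = univ := by
  rw [two_mul, add_nsmul]
  rcases nsmul_eq_univ_or_card_le hB0 hgen hs with h | h
  · exact univ_subset_iff.1 (h ▸ subset_add_left _ (zero_mem_nsmul hB0))
  · exact add_eq_univ_of_card_lt_card_add_card (by omega)

end Hamidoune

lemma Finset.exists_sum_nsmul_eq_of_mem_nsmul_image {ι M : Type*} [Fintype ι] [DecidableEq ι]
    [AddCommMonoid M] [DecidableEq M] (f : ι → M) {n : ℕ} {x : M} (hx : x ∈ n • univ.image f) :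
    ∃ c : ι → ℕ, ∑ i, c i = n ∧ ∑ i, c i • f i = x := by
  induction n generalizing x with
  | zero => exact ⟨0, by simp, by simpa [eq_comm] using hx⟩
  | succ n ih =>
    rw [succ_nsmul] at hx
    obtain ⟨y, hy, _, hj, rfl⟩ := mem_add.1 hx
    obtain ⟨j, -, rfl⟩ := mem_image.1 hj
    obtain ⟨c, hc, rfl⟩ := ih hy
    refine ⟨c + Pi.single j 1, ?_, ?_⟩
    · simp [sum_add_distrib, hc]
    · simp [add_nsmul, sum_add_distrib, Pi.single_apply]

lemma closure_image_natCast_eq_top {ι : Type*} [Fintype ι] {m : ℕ} (w : ι → ℕ)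
    (hgcd : univ.gcd w = 1) :
    AddSubgroup.closure ((univ.image fun i ↦ (w i : ZMod m)) : Set (ZMod m)) = ⊤ := by
  set H := AddSubgroup.closure ((univ.image fun i ↦ (w i : ZMod m)) : Set (ZMod m))
  have hgcdℤ : univ.gcd (fun i ↦ (w i : ℤ)) = 1 := by
    have hdvd : (univ.gcd fun i ↦ (w i : ℤ)).natAbs ∣ univ.gcd w :=
      dvd_gcd fun i _ ↦ Int.natAbs_dvd_natAbs.2 (gcd_dvd (mem_univ i))
    rw [hgcd, Nat.dvd_one] at hdvd
    have := Int.finsetGcd_nonneg (s := univ) (f := fun i ↦ (w i : ℤ))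
    omega
  obtain ⟨a, ha⟩ := Finset.gcd_eq_sum_mul univ fun i ↦ (w i : ℤ)
  have h1 : (1 : ZMod m) ∈ H := by
    have : (1 : ZMod m) = ∑ i, (a i) • (w i : ZMod m) := by
      simpa [hgcdℤ, zsmul_eq_mul, mul_comm] using congrArg (Int.cast : ℤ → ZMod m) ha
    rw [this]
    exact sum_mem fun i _ ↦ H.zsmul_mem (AddSubgroup.subset_closure (by simp)) _
  refine eq_top_iff.2 fun x _ ↦ ?_
  have := H.zsmul_mem h1 (x.cast : ℤ)
  rwa [zsmul_one, ZMod.intCast_zmod_cast] at this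

lemma exists_nat_combination_of_modEq {ι : Type*} [Fintype ι] [DecidableEq ι] (w : ι → ℕ)
    (i₀ : ι) {b : ℕ} (hb : ∀ i ≠ i₀, w i ≤ b) (c : ι → ℕ) {M : ℤ}
    (hc : ∑ i, (c i : ℤ) * (w i : ℤ) ≡ M [ZMOD w i₀]) (hM : (∑ i, c i : ℕ) * (b : ℤ) - w i₀ < M) :
    ∃ c' : ι → ℕ, M = ∑ i, (c' i : ℤ) * (w i : ℤ) := by
  have hsplit (g : ι → ℤ) : ∑ i, g i = g i₀ + ∑ i ∈ univ.erase i₀, g i :=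
    (add_sum_erase _ g (mem_univ i₀)).symm
  set X := ∑ i ∈ univ.erase i₀, (c i : ℤ) * (w i : ℤ) with hXdef
  have hX : X ≤ (∑ i, c i : ℕ) * (b : ℤ) := by
    push_cast
    rw [sum_mul, hsplit fun i ↦ (c i : ℤ) * b]
    refine le_add_of_nonneg_of_le (by positivity) (sum_le_sum fun i hi ↦ ?_)
    exact mul_le_mul_of_nonneg_left (by exact_mod_cast hb i (ne_of_mem_erase hi)) (by positivity)
  -- the `i₀`-term vanishes modulo `w i₀`, and `M - X > -w i₀` forces a nonnegative quotient
  obtain ⟨t, ht⟩ : (w i₀ : ℤ) ∣ M - X := by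
    have h := dvd_add hc.dvd (dvd_mul_left (w i₀ : ℤ) (c i₀))
    rwa [hsplit fun i ↦ (c i : ℤ) * (w i : ℤ), ← hXdef, sub_add_eq_sub_sub, sub_right_comm,
      sub_add_cancel] at h
  have ht0 : 0 ≤ t := by
    have : (w i₀ : ℤ) * (-1) < w i₀ * t := by linarith
    linarith [lt_of_mul_lt_mul_left this (by positivity)]
  refine ⟨Function.update c i₀ t.toNat, ?_⟩
  rw [hsplit, Function.update_self, Int.toNat_of_nonneg ht0]
  rw [sum_congr rfl fun i hi ↦ by rw [Function.update_of_ne (ne_of_mem_erase hi)]]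
  linarith

lemma injective_natCast_zmod {ι : Type*} (w : ι → ℕ) (hw : Function.Injective w)
    (hpos : ∀ i, 0 < w i) (i₀ : ι) (hlt : ∀ i ≠ i₀, w i < w i₀) :
    Function.Injective fun i ↦ (w i : ZMod (w i₀)) := by
  classical
  have hmod (i : ι) : w i % w i₀ = if i = i₀ then 0 else w i := by
    split_ifs with h
    · rw [h, Nat.mod_self]
    · exact Nat.mod_eq_of_lt (hlt i h)
  intro i j hij
  have := (ZMod.natCast_eq_natCast_iff' _ _ _).1 hij
  rw [hmod, hmod] at this
  split_ifs at this with hi hj hj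
  · rw [hi, hj]
  · exact absurd this.symm (hpos j).ne'
  · exact absurd this (hpos i).ne'
  · exact hw this

theorem exists_nat_combination_of_gcd_eq_one {ι : Type*} [Fintype ι] [DecidableEq ι] (w : ι → ℕ)
    (hw : Function.Injective w) (hpos : ∀ i, 0 < w i) (i₀ : ι) {b : ℕ}
    (hb : ∀ i ≠ i₀, w i ≤ b) (hbm : b < w i₀) (hgcd : univ.gcd w = 1) {M : ℤ}
    (hM : 2 * ((w i₀ / Fintype.card ι : ℕ) : ℤ) * b - w i₀ < M) :
    ∃ c : ι → ℕ, M = ∑ i, (c i : ℤ) * (w i : ℤ) := by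
  set m := w i₀
  have : NeZero m := ⟨(hpos i₀).ne'⟩
  set f : ι → ZMod m := fun i ↦ (w i : ZMod m)
  set B := univ.image f
  have hB0 : (0 : ZMod m) ∈ B := mem_image.2 ⟨i₀, mem_univ _, ZMod.natCast_self m⟩
  have hf : Function.Injective f :=
    injective_natCast_zmod w hw hpos i₀ fun i hi ↦ (hb i hi).trans_lt hbm
  have hcardB : #B = Fintype.card ι := by rw [card_image_of_injective _ hf, card_univ]
  have hk : 0 < Fintype.card ι := Fintype.card_pos_iff.2 ⟨i₀⟩
  have hkm : Fintype.card ι ≤ m := hcardB ▸ (card_le_univ B).trans_eq (ZMod.card m)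
  set s := m / Fintype.card ι
  have hs : 1 ≤ s := (Nat.one_le_div_iff hk).2 hkm
  have hcard : Fintype.card (ZMod m) < (s + 1) * #B := by
    rw [ZMod.card, hcardB, add_one_mul]
    exact Nat.lt_div_mul_add hk
  have huniv := Hamidoune.two_mul_nsmul_eq_univ hB0 (closure_image_natCast_eq_top w hgcd) hs hcard
  obtain ⟨c, hcsum, hcM⟩ :=
    exists_sum_nsmul_eq_of_mem_nsmul_image f (huniv ▸ mem_univ (M : ZMod m))
  refine exists_nat_combination_of_modEq w i₀ hb c ((ZMod.intCast_eq_intCast_iff _ _ m).1 ?_)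
    (by rw [hcsum]; push_cast; exact hM)
  simpa [f, nsmul_eq_mul] using hcM

/-- **Erdős–Graham theorem (1972).**
Let `k ≥ 2` and let `v 0 > v 1 > ⋯ > v (k-1)` be positive integers with
`d = gcd (v 0, …, v (k-1))`.  Then every integer `N` such that `d ∣ N` and
`N > 2 ⌊v 0 / (d k)⌋ ⬝ v 1 − v 0` can be written as a nonnegative integer linear
combination of `v 0, …, v (k-1)`.  (Here `v 0 / (d * k)` is natural-number
division, which equals the floor of the rational `v 0 / (d k)`.) -/
theorem erdos_graham
    (k : ℕ) (hk : 2 ≤ k) (v : Fin k → ℕ)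
    (hpos : ∀ i, 0 < v i) (hanti : StrictAnti v)
    (d : ℕ) (hd : d = Finset.univ.gcd v)
    (N : ℤ) (hdvd : (d : ℤ) ∣ N)
    (hN : N > 2 * ((v ⟨0, by omega⟩ / (d * k) : ℕ) : ℤ) * (v ⟨1, by omega⟩ : ℤ)
            - (v ⟨0, by omega⟩ : ℤ)) :
    ∃ c : Fin k → ℕ, N = ∑ i, (c i : ℤ) * (v i : ℤ) := by
  set i₀ : Fin k := ⟨0, by omega⟩
  set i₁ : Fin k := ⟨1, by omega⟩
  obtain ⟨w, hvw, hw⟩ := extract_gcd v ⟨i₀, mem_univ _⟩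
  simp only [mem_univ, forall_const, ← hd] at hvw
  have hd0 : 0 < d := Nat.pos_of_ne_zero fun h ↦ (hpos i₀).ne' (by rw [hvw, h, zero_mul])
  have hwanti : StrictAnti w := fun i j hij ↦
    Nat.lt_of_mul_lt_mul_left (a := d) (by rw [← hvw, ← hvw]; exact hanti hij)
  obtain ⟨M, rfl⟩ := hdvd
  have hM : 2 * ((w i₀ / Fintype.card (Fin k) : ℕ) : ℤ) * w i₁ - w i₀ < M := by
    rw [hvw, hvw, Nat.mul_div_mul_left _ _ hd0] at hN
    rw [Fintype.card_fin]
    generalize w i₀ / k = s at hN ⊢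
    push_cast at hN
    refine lt_of_mul_lt_mul_left (a := (d : ℤ)) ?_ (by positivity)
    linarith
  have hb (i : Fin k) (hi : i ≠ i₀) : w i ≤ w i₁ :=
    hwanti.antitone (Fin.le_def.2 (Nat.one_le_iff_ne_zero.2 (Fin.val_ne_of_ne hi)))
  obtain ⟨c, hc⟩ := exists_nat_combination_of_gcd_eq_one w hwanti.injective
    (fun i ↦ Nat.pos_of_mul_pos_left ((hvw i).symm ▸ hpos i)) i₀ hb
    (hwanti (show i₀ < i₁ from Fin.mk_lt_mk.2 one_pos)) hw hM
  refine ⟨c, ?_⟩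
  simp only [hc, hvw, mul_sum, Nat.cast_mul]
  exact sum_congr rfl fun i _ ↦ by ring
end

section
/- Let w ≥ 1 and k ≥ 1 be integers, and let v_1 > v_2 > ... > v_m be positive integers with m ≥ 8k satisfying w ≤ v_i < 2w for all i, and let d = gcd(v_1, ..., v_m). Then every positive integer N such that d divides N and k·N > w² can be written as a nonnegative integer linear combination of v_1, ..., v_m. -/
open Finset Pointwise

section Core
set_option linter.unusedSectionVars false
variable {G : Type*} [AddCommGroup G] [DecidableEq G] [Fintype G]

private lemma sub_add_self' (S A : Finset G) (h0 : (0:G) ∈ S) : A ⊆ A + S := by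
  intro x hx
  rw [Finset.mem_add]
  exact ⟨x, hx, 0, h0, add_zero x⟩

private lemma tr_eq (X : Finset G) (t : G) : X + {t} = X.image (· + t) := by
  ext y
  simp only [Finset.mem_add, mem_singleton, mem_image]
  constructor
  · rintro ⟨a, ha, b, rfl, rfl⟩; exact ⟨a, ha, rfl⟩
  · rintro ⟨a, ha, rfl⟩; exact ⟨a, ha, t, rfl, rfl⟩

private lemma tr_card (X : Finset G) (t : G) : (X + {t}).card = X.card := by
  rw [tr_eq]; exact Finset.card_image_of_injective _ (add_left_injective t)

private lemma tr_add (X S : Finset G) (t : G) : (X + {t}) + S = (X + S) + {t} := by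
  rw [add_right_comm]

private lemma tr_sdiff (X Y : Finset G) (t : G) :
    (X + {t}) \ (Y + {t}) = (X \ Y) + {t} := by
  rw [tr_eq, tr_eq, tr_eq]
  exact (Finset.image_sdiff _ _ (add_left_injective t)).symm

private lemma tr_bd (X S : Finset G) (t : G) :
    (((X + {t}) + S) \ (X + {t})).card = ((X + S) \ X).card := by
  rw [tr_add, tr_sdiff, tr_card]

private lemma submod (S A B : Finset G) :
    (((A ∩ B) + S) \ (A ∩ B)).card + (((A ∪ B) + S) \ (A ∪ B)).card
      ≤ ((A + S) \ A).card + ((B + S) \ B).card := by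
  classical
  set FA := A + S with hFA
  set FB := B + S with hFB
  have h1 : (A ∩ B) + S ⊆ FA ∩ FB := Finset.inter_add_subset
  have h2 : (A ∪ B) + S = FA ∪ FB := Finset.union_add
  set X₁ := (FA ∩ FB) \ A with hX₁
  set Y₁ := (FA ∩ FB) \ B with hY₁
  set X₂ := FA \ (A ∪ B) with hX₂
  set Y₂ := FB \ (A ∪ B) with hY₂
  set R := (FA ∩ FB) \ (A ∪ B) with hR
  have hI1 : X₁ ∩ Y₁ = R := by
    ext x; simp only [hX₁, hY₁, hR, mem_sdiff, mem_inter, mem_union]; tauto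
  have hI2 : X₂ ∩ Y₂ = R := by
    ext x; simp only [hX₂, hY₂, hR, mem_sdiff, mem_inter, mem_union]; tauto
  have hI3 : X₁ ∩ X₂ = R := by
    ext x; simp only [hX₁, hX₂, hR, mem_sdiff, mem_inter, mem_union]; tauto
  have hI4 : Y₁ ∩ Y₂ = R := by
    ext x; simp only [hY₁, hY₂, hR, mem_sdiff, mem_inter, mem_union]; tauto
  have e1 := Finset.card_union_add_card_inter X₁ Y₁
  have e2 := Finset.card_union_add_card_inter X₂ Y₂
  have e3 := Finset.card_union_add_card_inter X₁ X₂
  have e4 := Finset.card_union_add_card_inter Y₁ Y₂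
  rw [hI1] at e1; rw [hI2] at e2; rw [hI3] at e3; rw [hI4] at e4
  have i1 : (X₁ ∪ X₂).card ≤ (FA \ A).card := by
    apply Finset.card_le_card
    intro x hx
    simp only [hX₁, hX₂, mem_union, mem_sdiff, mem_inter] at hx ⊢
    tauto
  have i2 : (Y₁ ∪ Y₂).card ≤ (FB \ B).card := by
    apply Finset.card_le_card
    intro x hx
    simp only [hY₁, hY₂, mem_union, mem_sdiff, mem_inter] at hx ⊢
    tauto
  have i3 : (((A ∩ B) + S) \ (A ∩ B)).card ≤ (X₁ ∪ Y₁).card := by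
    apply Finset.card_le_card
    intro x hx
    simp only [mem_sdiff, mem_inter] at hx
    have := h1 hx.1
    simp only [hX₁, hY₁, mem_union, mem_sdiff, mem_inter] at this ⊢
    tauto
  have i4 : (((A ∪ B) + S) \ (A ∪ B)).card ≤ (X₂ ∪ Y₂).card := by
    apply Finset.card_le_card
    intro x hx
    rw [h2] at hx
    simp only [hX₂, hY₂, mem_union, mem_sdiff, mem_inter] at hx ⊢
    tauto
  omega

/-- Hamidoune-atom growth lemma. -/
private theorem growth (S : Finset G) (h0 : (0:G) ∈ S)
    (hgen : AddSubgroup.closure (S : Set G) = ⊤)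
    (A : Finset G) (hA : A.Nonempty) (hAS : A + S ≠ Finset.univ) :
    A.card + (S.card + 1) / 2 ≤ (A + S).card := by
  classical
  set 𝒱 : Finset (Finset G) :=
    Finset.univ.filter (fun B => B.Nonempty ∧ B + S ≠ Finset.univ) with h𝒱
  have hmem𝒱 : ∀ B : Finset G, B ∈ 𝒱 ↔ (B.Nonempty ∧ B + S ≠ Finset.univ) := by
    intro B; simp [h𝒱]
  have hA𝒱 : A ∈ 𝒱 := (hmem𝒱 A).2 ⟨hA, hAS⟩
  obtain ⟨A₁, hA₁, hminb⟩ :=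
    𝒱.exists_min_image (fun B => ((B + S) \ B).card) ⟨A, hA𝒱⟩
  set κ := ((A₁ + S) \ A₁).card with hκ
  set 𝒲 : Finset (Finset G) :=
    𝒱.filter (fun B => ((B + S) \ B).card = κ) with h𝒲
  have hmem𝒲 : ∀ B : Finset G, B ∈ 𝒲 ↔ (B ∈ 𝒱 ∧ ((B + S) \ B).card = κ) := by
    intro B; simp [h𝒲]
  obtain ⟨A₂, hA₂, hminc⟩ :=
    𝒲.exists_min_image Finset.card ⟨A₁, (hmem𝒲 A₁).2 ⟨hA₁, rfl⟩⟩
  rw [hmem𝒲] at hA₂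
  obtain ⟨hA₂𝒱, hA₂κ⟩ := hA₂
  have hA₂𝒱' := hA₂𝒱
  rw [hmem𝒱] at hA₂𝒱'
  obtain ⟨hA₂ne, hA₂S⟩ := hA₂𝒱'
  have hbd_card : ∀ B : Finset G, B.card + ((B+S)\B).card = (B + S).card := by
    intro B
    rw [add_comm, Finset.card_sdiff_add_card_eq_card (sub_add_self' S B h0)]
  -- complement trick
  have hsize : 2 * A₂.card + κ ≤ Fintype.card G := by
    set A₃ : Finset G := (Finset.univ \ (A₂ + S)).image Neg.neg with hA₃
    have hA₃mem : ∀ z : G, z ∈ A₃ ↔ -z ∉ A₂ + S := by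
      intro z
      rw [hA₃, Finset.mem_image]
      constructor
      · rintro ⟨b, hb, rfl⟩
        rw [Finset.mem_sdiff] at hb
        rw [neg_neg]
        exact hb.2
      · intro hz
        exact ⟨-z, by rw [Finset.mem_sdiff]; exact ⟨Finset.mem_univ _, hz⟩, neg_neg z⟩
    have hA₃ne : A₃.Nonempty := by
      apply Finset.Nonempty.image
      rw [Finset.sdiff_nonempty]
      intro hsub
      exact hA₂S (Finset.univ_subset_iff.mp hsub)
    obtain ⟨a₂, ha₂⟩ := hA₂ne
    have hA₃S : A₃ + S ≠ Finset.univ := by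
      intro hcon
      have : -a₂ ∈ A₃ + S := by rw [hcon]; exact Finset.mem_univ _
      rw [Finset.mem_add] at this
      obtain ⟨y, hy, s, hs, hsum⟩ := this
      rw [hA₃mem] at hy
      apply hy
      have h2 : a₂ = -(y + s) := by rw [hsum, neg_neg]
      rw [Finset.mem_add]
      exact ⟨a₂, ha₂, s, hs, by rw [h2]; abel⟩
    have hA₃bd : ((A₃ + S) \ A₃).card ≤ κ := by
      have hsub : (A₃ + S) \ A₃ ⊆ ((A₂ + S) \ A₂).image Neg.neg := by
        intro z hz
        rw [Finset.mem_sdiff] at hz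
        obtain ⟨hz1, hz2⟩ := hz
        rw [Finset.mem_image]
        refine ⟨-z, ?_, neg_neg z⟩
        rw [Finset.mem_sdiff]
        constructor
        · -- -z ∈ A₂ + S  from z ∉ A₃
          by_contra hcon
          exact hz2 ((hA₃mem z).2 hcon)
        · -- -z ∉ A₂
          intro hcon
          rw [Finset.mem_add] at hz1
          obtain ⟨y, hy, s, hs, hsum⟩ := hz1
          rw [hA₃mem] at hy
          apply hy
          rw [Finset.mem_add]
          refine ⟨-z, hcon, s, hs, ?_⟩
          rw [← hsum]; abel
      calc ((A₃ + S) \ A₃).card ≤ (((A₂ + S) \ A₂).image Neg.neg).card :=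
            Finset.card_le_card hsub
        _ = κ := by rw [Finset.card_image_of_injective _ neg_injective, ← hA₂κ]
    have hA₃𝒱 : A₃ ∈ 𝒱 := (hmem𝒱 A₃).2 ⟨hA₃ne, hA₃S⟩
    have hA₃κ : ((A₃ + S) \ A₃).card = κ := le_antisymm hA₃bd (hminb A₃ hA₃𝒱)
    have hA₃𝒲 : A₃ ∈ 𝒲 := (hmem𝒲 A₃).2 ⟨hA₃𝒱, hA₃κ⟩
    have hcard3 : A₂.card ≤ A₃.card := hminc A₃ hA₃𝒲
    have e1 : A₃.card + (A₂ + S).card = Fintype.card G := by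
      rw [hA₃, Finset.card_image_of_injective _ neg_injective,
        Finset.card_sdiff_add_card_eq_card (Finset.subset_univ _), Finset.card_univ]
    have e2 := hbd_card A₂
    rw [hA₂κ] at e2
    omega
  -- translate A₂ to contain 0
  obtain ⟨a₀, ha₀⟩ := hA₂ne
  set H : Finset G := A₂ + {-a₀} with hH
  have h0H : (0:G) ∈ H := by
    rw [hH, Finset.mem_add]
    exact ⟨a₀, ha₀, -a₀, Finset.mem_singleton_self _, add_neg_cancel a₀⟩
  have hHcard : H.card = A₂.card := tr_card A₂ (-a₀)
  have hHbd : ((H + S) \ H).card = κ := by rw [hH, tr_bd]; exact hA₂κ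
  have hHS : H + S ≠ Finset.univ := by
    rw [hH, tr_add]
    intro hcon
    apply hA₂S
    exact Finset.eq_univ_of_card _
      (by rw [← tr_card (A₂ + S) (-a₀), hcon, Finset.card_univ])
  have hH𝒱 : H ∈ 𝒱 := (hmem𝒱 H).2 ⟨⟨0, h0H⟩, hHS⟩
  have hH𝒲 : H ∈ 𝒲 := (hmem𝒲 H).2 ⟨hH𝒱, hHbd⟩
  -- translate-stability of the atom
  have hstab : ∀ a ∈ H, H + {a} = H := by
    intro a ha
    by_contra hne
    set B := H + {a} with hB
    have hBcard : B.card = H.card := tr_card _ _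
    have hBbd : ((B + S) \ B).card = κ := by rw [hB, tr_bd]; exact hHbd
    have hBS : B + S ≠ Finset.univ := by
      rw [hB, tr_add]
      intro hcon
      apply hHS
      exact Finset.eq_univ_of_card _
        (by rw [← tr_card (H + S) a, hcon, Finset.card_univ])
    have hB𝒱 : B ∈ 𝒱 := (hmem𝒱 B).2 ⟨⟨0 + a, by rw [hB, Finset.mem_add]; exact ⟨0, h0H, a, Finset.mem_singleton_self _, rfl⟩⟩, hBS⟩
    set C := H ∩ B with hC
    have haC : a ∈ C := by
      rw [hC, Finset.mem_inter]
      refine ⟨ha, ?_⟩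
      rw [hB, Finset.mem_add]
      exact ⟨0, h0H, a, Finset.mem_singleton_self _, zero_add a⟩
    have hCH : C ≠ H := by
      intro hcon
      apply hne
      refine (Finset.eq_of_subset_of_card_le ?_ ?_).symm
      · intro x hx
        have hxC : x ∈ C := by rw [hcon]; exact hx
        rw [hC, Finset.mem_inter] at hxC
        exact hxC.2
      · rw [hBcard]
    have hClt : C.card < H.card := by
      apply Finset.card_lt_card
      rw [Finset.ssubset_iff_subset_ne]
      exact ⟨Finset.inter_subset_left, hCH⟩
    have hC𝒱 : C ∈ 𝒱 := by
      rw [hmem𝒱]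
      refine ⟨⟨a, haC⟩, ?_⟩
      intro hcon
      apply hHS
      apply Finset.univ_subset_iff.mp
      rw [← hcon]
      exact Finset.add_subset_add_right Finset.inter_subset_left
    have hsm := submod S H B
    rw [← hC] at hsm
    have hCκ : κ ≤ ((C + S) \ C).card := hminb C hC𝒱
    rw [hHbd, hBbd] at hsm
    by_cases hUniv : (H ∪ B) + S = Finset.univ
    · have e5 : (((H∪B)+S) \ (H∪B)).card + (H∪B).card = Fintype.card G := by
        rw [hUniv, Finset.card_sdiff_add_card_eq_card (Finset.subset_univ _), Finset.card_univ]
      have e6 := Finset.card_union_add_card_inter H B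
      have e10 : 1 ≤ C.card := Finset.card_pos.2 ⟨a, haC⟩
      rw [← hC] at e6
      rw [← hHcard] at hsize
      omega
    · have hU𝒱 : (H ∪ B) ∈ 𝒱 := by
        rw [hmem𝒱]
        exact ⟨⟨0, Finset.mem_union_left _ h0H⟩, hUniv⟩
      have hUκ : κ ≤ (((H∪B) + S) \ (H∪B)).card := hminb _ hU𝒱
      have hCeq : ((C + S) \ C).card = κ := by omega
      have hC𝒲 : C ∈ 𝒲 := (hmem𝒲 C).2 ⟨hC𝒱, hCeq⟩
      have := hminc C hC𝒲
      omega
  -- H is closed under addition and negation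
  have hadd : ∀ x ∈ H, ∀ y ∈ H, x + y ∈ H := by
    intro x hx y hy
    rw [← hstab y hy, Finset.mem_add]
    exact ⟨x, hx, y, Finset.mem_singleton_self _, rfl⟩
  have hneg : ∀ x ∈ H, -x ∈ H := by
    intro x hx
    have h0' : (0:G) ∈ H + {x} := by rw [hstab x hx]; exact h0H
    rw [Finset.mem_add] at h0'
    obtain ⟨b, hb, c, hc, hbc⟩ := h0'
    rw [Finset.mem_singleton] at hc
    rw [hc] at hbc
    have hb' : b = -x := eq_neg_of_add_eq_zero_left hbc
    rw [← hb']; exact hb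
  -- S ⊄ H by generation
  have hSnotH : ∃ s ∈ S, s ∉ H := by
    by_contra hcon
    push_neg at hcon
    set H' : AddSubgroup G :=
      { carrier := ↑H
        zero_mem' := h0H
        add_mem' := fun {a b} ha hb =>
          Finset.mem_coe.mpr (hadd a (Finset.mem_coe.mp ha) b (Finset.mem_coe.mp hb))
        neg_mem' := fun {a} ha => Finset.mem_coe.mpr (hneg a (Finset.mem_coe.mp ha)) } with hH'
    have hle : AddSubgroup.closure (S : Set G) ≤ H' := by
      rw [AddSubgroup.closure_le]
      intro s hs
      exact hcon s hs
    rw [hgen] at hle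
    apply hHS
    apply Finset.univ_subset_iff.mp
    intro x _
    have hxH : x ∈ H := hle (AddSubgroup.mem_top x)
    exact sub_add_self' S H h0 hxH
  obtain ⟨s₀, hs₀S, hs₀H⟩ := hSnotH
  -- disjointness and the 2κ ≥ |S| bound
  have hdisj : Disjoint H (H + {s₀}) := by
    rw [Finset.disjoint_left]
    intro x hx hx'
    rw [Finset.mem_add] at hx'
    obtain ⟨b, hb, c, hc, hbc⟩ := hx'
    rw [Finset.mem_singleton] at hc
    rw [hc] at hbc
    apply hs₀H
    have hs' : s₀ = -b + x := by rw [← hbc, neg_add_cancel_left]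
    rw [hs']
    exact hadd _ (hneg _ hb) _ hx
  have hsub1 : H ∪ (H + {s₀}) ⊆ H + S := by
    apply Finset.union_subset (sub_add_self' S H h0)
    intro x hx
    rw [Finset.mem_add] at hx ⊢
    obtain ⟨b, hb, c, hc, hbc⟩ := hx
    rw [Finset.mem_singleton] at hc
    rw [hc] at hbc
    exact ⟨b, hb, s₀, hs₀S, hbc⟩
  have hsub2 : S ⊆ H + S := by
    intro s hs
    rw [Finset.mem_add]
    exact ⟨0, h0H, s, hs, zero_add s⟩
  have h2H : H.card + (H + {s₀}).card ≤ (H + S).card := by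
    rw [← Finset.card_union_of_disjoint hdisj]
    exact Finset.card_le_card hsub1
  have hScard : S.card ≤ (H + S).card := Finset.card_le_card hsub2
  have heH := hbd_card H
  rw [hHbd] at heH
  have hts : (H + {s₀}).card = H.card := tr_card _ _
  have h2κ : S.card ≤ 2 * κ := by omega
  -- conclude
  have hAbd : κ ≤ ((A + S) \ A).card := hminb A hA𝒱
  have heA := hbd_card A
  omega


private lemma cover (S : Finset G) (h0 : (0:G) ∈ S)
    (hgen : AddSubgroup.closure (S : Set G) = ⊤) (j : ℕ)
    (hj : Fintype.card G ≤ 1 + j * ((S.card + 1) / 2)) :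
    (fun A => A + S)^[j] {0} = Finset.univ := by
  classical
  set h := (S.card + 1) / 2 with hh
  have aux : ∀ i : ℕ, (fun A => A + S)^[i] {0} = Finset.univ ∨
      1 + i * h ≤ ((fun A => A + S)^[i] ({0} : Finset G)).card := by
    intro i
    induction i with
    | zero => right; simp
    | succ i ih =>
      rw [Function.iterate_succ_apply']
      rcases ih with h1 | h2
      · left
        rw [h1]
        exact Finset.univ_subset_iff.mp (sub_add_self' S Finset.univ h0)
      · by_cases hfull : (fun A => A + S)^[i] ({0} : Finset G) + S = Finset.univ
        · left; exact hfull
        · right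
          have hne : ((fun A => A + S)^[i] ({0} : Finset G)).Nonempty := by
            rw [← Finset.card_pos]; omega
          have := growth S h0 hgen _ hne hfull
          have hmul : (i + 1) * h = i * h + h := by ring
          omega
  rcases aux j with h1 | h2
  · exact h1
  · apply Finset.eq_univ_of_card
    have h3 := Finset.card_le_univ ((fun A => A + S)^[j] ({0} : Finset G))
    omega

private lemma extract (S : Finset G) :
    ∀ j : ℕ, ∀ x ∈ (fun A => A + S)^[j] ({0} : Finset G),
      ∃ l : Multiset G, (∀ y ∈ l, y ∈ S) ∧ Multiset.card l = j ∧ l.sum = x := by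
  intro j
  induction j with
  | zero =>
    intro x hx
    simp only [Function.iterate_zero, id_eq, Finset.mem_singleton] at hx
    exact ⟨0, by simp, by simp, by simp [hx]⟩
  | succ j ih =>
    intro x hx
    rw [Function.iterate_succ_apply', Finset.mem_add] at hx
    obtain ⟨y, hy, s, hs, rfl⟩ := hx
    obtain ⟨l, hl1, hl2, hl3⟩ := ih y hy
    refine ⟨s ::ₘ l, ?_, by simp [hl2], ?_⟩
    · intro z hz
      rw [Multiset.mem_cons] at hz
      rcases hz with rfl | hz
      · exact hs
      · exact hl1 z hz
    · rw [Multiset.sum_cons, hl3, add_comm]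

private lemma msum_count (F : Finset G) (l : Multiset G) (hl : ∀ y ∈ l, y ∈ F) :
    l.sum = ∑ x ∈ F, (l.count x) • x := by
  classical
  induction l using Multiset.induction_on with
  | empty => simp
  | cons a t ih =>
    have ha : a ∈ F := hl a (Multiset.mem_cons_self a t)
    have ht : ∀ y ∈ t, y ∈ F := fun y hy => hl y (Multiset.mem_cons_of_mem hy)
    rw [Multiset.sum_cons, ih ht]
    have : ∀ x ∈ F, ((a ::ₘ t).count x) • x = (t.count x) • x + (if x = a then x else 0) := by
      intro x _
      rw [Multiset.count_cons]
      rcases eq_or_ne x a with rfl | hne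
      · simp [add_nsmul]
      · simp [hne]
    rw [Finset.sum_congr rfl this, Finset.sum_add_distrib, Finset.sum_ite_eq' F a (fun x => x),
      if_pos ha, add_comm]

private lemma mcard_count (F : Finset G) (l : Multiset G) (hl : ∀ y ∈ l, y ∈ F) :
    Multiset.card l = ∑ x ∈ F, l.count x := by
  classical
  induction l using Multiset.induction_on with
  | empty => simp
  | cons a t ih =>
    have ha : a ∈ F := hl a (Multiset.mem_cons_self a t)
    have ht : ∀ y ∈ t, y ∈ F := fun y hy => hl y (Multiset.mem_cons_of_mem hy)
    rw [Multiset.card_cons, ih ht]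
    have : ∀ x ∈ F, (a ::ₘ t).count x = t.count x + (if x = a then 1 else 0) := by
      intro x _
      rw [Multiset.count_cons]
    rw [Finset.sum_congr rfl this, Finset.sum_add_distrib, Finset.sum_ite_eq' F a (fun _ => 1),
      if_pos ha, add_comm]


end Core

/-- Let `w ≥ 1` and `k ≥ 1` be integers, and let `v 0 > v 1 > ⋯ > v (m-1)` be
positive integers with `m ≥ 8k`, all lying in the interval `[w, 2w)`, and with
greatest common divisor `d`.  Then every positive integer `N` divisible by `d`
with `k ⬝ N > w²` is a nonnegative integer linear combination of the `v i`. -/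
theorem erdos_graham_batch
    (w k m : ℕ) (hw : 1 ≤ w) (hk : 1 ≤ k) (hm : 8 * k ≤ m)
    (v : Fin m → ℕ) (hanti : StrictAnti v)
    (hrange : ∀ i, w ≤ v i ∧ v i < 2 * w)
    (d : ℕ) (hd : d = Finset.univ.gcd v)
    (N : ℕ) (hNpos : 0 < N) (hdvd : d ∣ N) (hN : w ^ 2 < k * N) :
    ∃ c : Fin m → ℕ, N = ∑ i, c i * v i := by
  classical
  have hm8 : 8 ≤ m := le_trans (by omega) hm
  haveI : NeZero m := ⟨by omega⟩
  set i0 : Fin m := ⟨m - 1, by omega⟩ with hi0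
  set a := v i0 with ha
  have hdvd_all : ∀ i, d ∣ v i := fun i => hd ▸ Finset.gcd_dvd (Finset.mem_univ i)
  have hvpos : ∀ i, 0 < v i := fun i => lt_of_lt_of_le hw (hrange i).1
  have hdpos : 0 < d := by
    rcases Nat.eq_zero_or_pos d with h0 | h
    · have hz := hdvd_all i0
      rw [h0, zero_dvd_iff] at hz
      have := hvpos i0
      omega
    · exact h
  have hia : ∀ i, a ≤ v i := by
    intro i
    apply hanti.antitone
    rw [Fin.le_def]
    simp only [hi0]
    omega
  have hwa : w ≤ a := (hrange i0).1
  -- each v i < 2 * a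
  have hv2a : ∀ i, v i < 2 * a := fun i => lt_of_lt_of_le (hrange i).2 (by omega)
  set n := a / d with hn
  have hna : d * n = a := Nat.mul_div_cancel' (hdvd_all i0)
  set g : Fin m → ℕ := fun i => (v i - a) / d with hg
  have hdva : ∀ i, d ∣ v i - a := fun i => Nat.dvd_sub (hdvd_all i) (hdvd_all i0)
  have hdg : ∀ i, d * g i = v i - a := fun i => Nat.mul_div_cancel' (hdva i)
  have hvi : ∀ i, v i = a + d * g i := by
    intro i
    have h1 := hdg i
    have h2 := hia i
    omega
  have hg0 : g i0 = 0 := by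
    simp only [hg, ← ha, Nat.sub_self, Nat.zero_div]
  have hglt : ∀ i, g i < n := by
    intro i
    have h1 := hdg i
    have h2 := hv2a i
    have h3 := hia i
    have h4 : d * g i < d * n := by omega
    exact Nat.lt_of_mul_lt_mul_left h4
  have hginj : Function.Injective g := by
    intro i j hij
    apply hanti.injective
    have h1 := hdg i
    have h2 := hdg j
    have h3 := hia i
    have h4 := hia j
    rw [hij] at h1
    omega
  have hn2 : 2 ≤ n := by
    have h0i : (0 : Fin m) ≠ i0 := by
      intro hc
      have := congrArg Fin.val hc
      simp only [hi0, Fin.val_zero] at this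
      omega
    have hg00 : g 0 ≠ 0 := by
      intro hc
      exact h0i (hginj (by rw [hc, hg0]))
    have := hglt 0
    omega
  haveI : NeZero n := ⟨by omega⟩
  set ι : Fin m → ZMod n := fun i => (g i : ZMod n) with hι
  have hιinj : Function.Injective ι := by
    intro i j hij
    apply hginj
    have hi' := ZMod.val_cast_of_lt (hglt i)
    have hj' := ZMod.val_cast_of_lt (hglt j)
    rw [← hi', ← hj']
    simp only [hι] at hij
    rw [hij]
  set S : Finset (ZMod n) := Finset.univ.image ι with hS
  have h0S : (0 : ZMod n) ∈ S := by
    rw [hS, Finset.mem_image]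
    exact ⟨i0, Finset.mem_univ _, by simp [hι, hg0]⟩
  have hScard : S.card = m := by
    rw [hS, Finset.card_image_of_injective _ hιinj, Finset.card_univ, Fintype.card_fin]
  have hgcd1 : ∀ e : ℕ, e ∣ n → (∀ i, e ∣ g i) → e = 1 := by
    intro e hen hegi
    have hepos : 0 < e := by
      rcases Nat.eq_zero_or_pos e with rfl | h
      · rw [zero_dvd_iff] at hen; omega
      · exact h
    have hde : d * e ∣ d := by
      have hde' : d * e ∣ Finset.univ.gcd v := by
        apply Finset.dvd_gcd
        intro i _
        rw [hvi i]
        have h1 : d * e ∣ a := by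
          rw [← hna]
          exact mul_dvd_mul_left d hen
        have h2 : d * e ∣ d * g i := mul_dvd_mul_left d (hegi i)
        exact Nat.dvd_add h1 h2
      rw [← hd] at hde'
      exact hde'
    have hle := Nat.le_of_dvd hdpos hde
    have : e ≤ 1 := Nat.le_of_mul_le_mul_left (by omega : d * e ≤ d * 1) hdpos
    omega
  have hgen : AddSubgroup.closure (S : Set (ZMod n)) = ⊤ := by
    set P := AddSubgroup.closure (S : Set (ZMod n)) with hP
    set φ := Int.castAddHom (ZMod n) with hφ
    obtain ⟨z, hz⟩ := Int.subgroup_cyclic (P.comap φ)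
    have hmem : ∀ y : ℤ, y ∈ P.comap φ ↔ z ∣ y := by
      intro y
      rw [hz, AddSubgroup.mem_closure_singleton]
      constructor
      · rintro ⟨kk, hk⟩
        exact ⟨kk, by rw [← hk]; simp [mul_comm]⟩
      · rintro ⟨kk, hk⟩
        exact ⟨kk, by rw [hk]; simp [mul_comm]⟩
    have hzn : z ∣ (n : ℤ) := by
      rw [← hmem]
      show φ (n:ℤ) ∈ P
      have : φ ((n : ℕ) : ℤ) = ((n : ℕ) : ZMod n) := by simp [hφ]
      rw [this, ZMod.natCast_self]
      exact P.zero_mem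
    have hzg : ∀ i, z ∣ (g i : ℤ) := by
      intro i
      rw [← hmem]
      show φ (g i : ℤ) ∈ P
      have heq : φ ((g i : ℕ) : ℤ) = ι i := by simp [hφ, hι]
      rw [heq]
      apply AddSubgroup.subset_closure
      rw [Finset.mem_coe, hS, Finset.mem_image]
      exact ⟨i, Finset.mem_univ _, rfl⟩
    have hz1 : z.natAbs = 1 := by
      apply hgcd1
      · rw [← Int.natAbs_natCast n]
        exact Int.natAbs_dvd_natAbs.mpr hzn
      · intro i
        rw [← Int.natAbs_natCast (g i)]
        exact Int.natAbs_dvd_natAbs.mpr (hzg i)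
    have hzdvd : ∀ y : ℤ, z ∣ y := by
      intro y
      rw [← Int.natAbs_dvd, hz1]
      exact one_dvd y
    rw [eq_top_iff]
    intro x _
    have hx : ((x.val : ℕ) : ℤ) ∈ P.comap φ := (hmem _).mpr (hzdvd _)
    have hx' : φ (((x.val : ℕ) : ℤ)) ∈ P := hx
    have heq : φ (((x.val : ℕ) : ℤ)) = x := by
      simp only [hφ, Int.coe_castAddHom, Int.cast_natCast]
      exact ZMod.natCast_rightInverse x
    rw [heq] at hx'
    exact hx'
  -- staircase: v 0 is at least a + (m-1)
  have hstair : ∀ t, ∀ ht : t < m, v ⟨t, ht⟩ + t ≤ v 0 := by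
    intro t
    induction t with
    | zero =>
      intro ht
      have : (⟨0, ht⟩ : Fin m) = 0 := by
        apply Fin.ext
        simp
      rw [this]
      omega
    | succ t ih =>
      intro ht
      have ht' : t < m := by omega
      have hlt : v ⟨t+1, ht⟩ < v ⟨t, ht'⟩ := by
        apply hanti
        rw [Fin.lt_def]
        simp
      have := ih ht'
      omega
  have hv0a : a + (m - 1) ≤ v 0 := by
    have h1 := hstair (m-1) (by omega)
    have h2 : (⟨m-1, by omega⟩ : Fin m) = i0 := by
      apply Fin.ext
      simp [hi0]
    rw [h2] at h1
    omega
  -- cover parameters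
  set h2 : ℕ := (m + 1) / 2 with hh2
  have hh2pos : 0 < h2 := by omega
  have h4k : 4 * k ≤ h2 := by omega
  set js : ℕ := (n - 2 + h2) / h2 with hjs
  have hcover : (fun A => A + S)^[js] {0} = Finset.univ := by
    apply cover S h0S hgen
    rw [ZMod.card n, hScard, ← hh2]
    have hdm := Nat.div_add_mod (n - 2 + h2) h2
    have hmodlt := Nat.mod_lt (n - 2 + h2) hh2pos
    rw [← hjs] at hdm
    have hcomm : js * h2 = h2 * js := Nat.mul_comm _ _
    omega
  -- budget : k * (js * v 0) ≤ w ^ 2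
  set X := n - 2 with hX
  have hXn : X + 2 = n := by omega
  set Y := X / 4 with hY
  have hjs_eq : js = X / h2 + 1 := by
    rw [hjs]
    exact Nat.add_div_right _ hh2pos
  have hbudget : k * (js * v 0) ≤ w ^ 2 := by
    have s1 : X / h2 ≤ X / (4 * k) := Nat.div_le_div_left h4k (by omega)
    have s2 : k * (X / (4 * k)) ≤ k * X / (4 * k) := Nat.mul_div_le_mul_div_assoc _ _ _
    have s3 : k * X / (4 * k) = Y := by
      rw [hY, show 4 * k = k * 4 by ring, Nat.mul_div_mul_left _ _ (by omega : 0 < k)]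
    have s5 : k * js ≤ Y + k := by
      have := Nat.mul_le_mul_left k s1
      rw [hjs_eq, Nat.mul_add, Nat.mul_one]
      omega
    have s6 : k * (js * v 0) ≤ (Y + k) * v 0 := by
      rw [← Nat.mul_assoc]
      exact Nat.mul_le_mul_right _ s5
    -- now the purely multiplicative part
    have hY4 : 4 * Y ≤ X := by
      rw [hY, Nat.mul_comm]
      exact Nat.div_mul_le_self X 4
    have hXv : X + 8 * k + 1 ≤ v 0 := by
      have := Nat.div_le_self a d
      omega
    have hv0w : v 0 + 1 ≤ 2 * w := by
      have := (hrange 0).2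
      omega
    have hwv0 : w ≤ v 0 := (hrange 0).1
    have p1 : 4 * (Y * v 0) ≤ X * v 0 := by
      have := Nat.mul_le_mul_right (v 0) hY4
      calc 4 * (Y * v 0) = 4 * Y * v 0 := by ring
        _ ≤ X * v 0 := this
    have p2 : X * v 0 + 8 * (k * v 0) + v 0 ≤ v 0 * v 0 := by
      have := Nat.mul_le_mul_right (v 0) hXv
      calc X * v 0 + 8 * (k * v 0) + v 0 = (X + 8 * k + 1) * v 0 := by ring
        _ ≤ v 0 * v 0 := this
    have p3 : v 0 * v 0 + v 0 ≤ 2 * (w * v 0) := by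
      have := Nat.mul_le_mul_right (v 0) hv0w
      calc v 0 * v 0 + v 0 = (v 0 + 1) * v 0 := by ring
        _ ≤ 2 * w * v 0 := this
        _ = 2 * (w * v 0) := by ring
    have p4 : 2 * (w * v 0) + 2 * w ≤ 4 * (w * w) := by
      calc 2 * (w * v 0) + 2 * w = 2 * w * (v 0 + 1) := by ring
        _ ≤ 2 * w * (2 * w) := Nat.mul_le_mul_left _ hv0w
        _ = 4 * (w * w) := by ring
    have p5 : (Y + k) * v 0 = Y * v 0 + k * v 0 := by ring
    have hsq : w ^ 2 = w * w := sq w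
    omega
  -- target and extraction
  set N' := N / d with hN'
  have hdN : d * N' = N := Nat.mul_div_cancel' hdvd
  have htar : ((N' : ZMod n)) ∈ (fun A => A + S)^[js] ({0} : Finset (ZMod n)) := by
    rw [hcover]; exact Finset.mem_univ _
  obtain ⟨l, hlS, hlcard, hlsum⟩ := extract S js _ htar
  set c' : Fin m → ℕ := fun i => l.count (ι i) with hc'
  have hinj_on : ∀ x ∈ Finset.univ, ∀ y ∈ Finset.univ, ι x = ι y → x = y :=
    fun x _ y _ h => hιinj h
  have hsum_c' : ∑ i, c' i = js := by
    rw [← hlcard, mcard_count S l hlS, hS, Finset.sum_image hinj_on]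
  set V := ∑ i, c' i * g i with hV
  have hVZ : ((V : ℕ) : ZMod n) = (N' : ZMod n) := by
    rw [← hlsum, msum_count S l hlS, hS, Finset.sum_image hinj_on, hV]
    push_cast
    apply Finset.sum_congr rfl
    intro i _
    rw [nsmul_eq_mul]
  have hmodeq : (d * V) % a = N % a := by
    have h1 : V ≡ N' [MOD n] := (ZMod.natCast_eq_natCast_iff _ _ _).mp hVZ
    have hmul : d * V ≡ d * N' [MOD d * n] := h1.mul_left' d
    rw [hna, hdN] at hmul
    exact hmul
  have hgmono : ∀ i, g i ≤ g 0 := by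
    intro i
    have h1 := hdg i
    have h2 := hdg 0
    have h3 : v i ≤ v 0 := by
      rcases eq_or_ne i 0 with rfl | hne
      · exact le_refl _
      · exact le_of_lt (hanti (by
          rw [Fin.lt_def]
          simp only [Fin.val_zero]
          exact Nat.pos_of_ne_zero (fun hc => hne (Fin.ext (by simpa using hc)))))
    have h4 := hia i
    have h5 := hia 0
    have h6 : d * g i ≤ d * g 0 := by omega
    exact Nat.le_of_mul_le_mul_left h6 hdpos
  have hVle : V ≤ js * g 0 := by
    rw [hV, ← hsum_c', Finset.sum_mul]
    apply Finset.sum_le_sum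
    intro i _
    exact Nat.mul_le_mul_left _ (hgmono i)
  have hval : ∑ i, c' i * v i = js * a + d * V := by
    have hterm : ∀ i ∈ Finset.univ, c' i * v i = c' i * a + d * (c' i * g i) := by
      intro i _
      rw [hvi i]
      ring
    rw [Finset.sum_congr rfl hterm, Finset.sum_add_distrib, ← Finset.sum_mul, hsum_c',
      ← Finset.mul_sum, ← hV]
  have hvlev0 : js * a + d * V ≤ js * v 0 := by
    have h1 : d * V ≤ d * (js * g 0) := Nat.mul_le_mul_left _ hVle
    have h2 : js * a + d * (js * g 0) = js * v 0 := by
      rw [hvi 0]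
      ring
    omega
  have hlt : js * v 0 < N := by
    have h1 : k * (js * v 0) < k * N := by omega
    exact Nat.lt_of_mul_lt_mul_left h1
  have hvalN : ∑ i, c' i * v i ≤ N := by omega
  have hdvd2 : a ∣ (N - ∑ i, c' i * v i) := by
    have h1 : (∑ i, c' i * v i) % a = N % a := by
      rw [hval, show js * a + d * V = a * js + d * V by ring, Nat.mul_add_mod]
      exact hmodeq
    exact (Nat.modEq_iff_dvd' hvalN).mp h1
  obtain ⟨t, ht⟩ := hdvd2
  refine ⟨fun i => if i = i0 then c' i + t else c' i, ?_⟩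
  have hsplit : ∑ i, (if i = i0 then c' i + t else c' i) * v i
      = (∑ i, c' i * v i) + t * a := by
    have hterm : ∀ i ∈ Finset.univ, (if i = i0 then c' i + t else c' i) * v i
        = c' i * v i + (if i = i0 then t * v i else 0) := by
      intro i _
      by_cases h : i = i0
      · rw [if_pos h, if_pos h]
        ring
      · rw [if_neg h, if_neg h]
        ring
    rw [Finset.sum_congr rfl hterm, Finset.sum_add_distrib,
      Finset.sum_ite_eq' Finset.univ i0 (fun i => t * v i), if_pos (Finset.mem_univ _), ← ha]
  rw [hsplit]
  have hcomm : a * t = t * a := Nat.mul_comm a t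
  omega
end

section
/- Let n ≥ 1 and let a_1, ..., a_n be real numbers with ℓ ≤ a_j ≤ r for all j, where ℓ < r, and let μ = (a_1 + ... + a_n)/n. Let σ be a uniformly random permutation of {1, ..., n} and set X_j = a_{σ(j)}. Then for every 1 ≤ i ≤ n and every t > 0, the probability that |Σ_{j=1}^i X_j − μ·i| ≥ t·i is at most 2·exp(−2·i·t²/(r − ℓ)²). -/
open Real

/-- Core scalar inequality behind Hoeffding's lemma. -/
lemma hoeffding_core (p : ℝ) (hp0 : 0 ≤ p) (hp1 : p ≤ 1) (u : ℝ) :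
    p + (1 - p) * exp u ≤ exp ((1 - p) * u + u ^ 2 / 8) := by
  set q : ℝ := 1 - p with hq
  have hq0 : 0 ≤ q := by rw [hq]; linarith
  have hpq : p + q = 1 := by rw [hq]; ring
  clear_value q
  have hφpos : ∀ x : ℝ, 0 < p + q * exp x := by
    intro x
    rcases lt_or_eq_of_le hp0 with h | h
    · positivity
    · have hq1 : q = 1 := by linarith
      rw [← h, hq1]; simpa using exp_pos x
  set F : ℝ → ℝ := fun x => q * x + x ^ 2 / 8 - Real.log (p + q * exp x) with hF
  set F' : ℝ → ℝ := fun x => q + x / 4 - q * exp x / (p + q * exp x) with hF'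
  have hder : ∀ x, HasDerivAt F (F' x) x := by
    intro x
    have hφ : HasDerivAt (fun y : ℝ => p + q * exp y) (q * exp x) x :=
      (((Real.hasDerivAt_exp x).const_mul q).const_add p)
    have hlog : HasDerivAt (fun y => Real.log (p + q * exp y))
        (q * exp x / (p + q * exp x)) x := hφ.log (hφpos x).ne'
    have h2 : HasDerivAt (fun y : ℝ => q * y) q x := by
      simpa using (hasDerivAt_id x).const_mul q
    have h1 : HasDerivAt (fun y : ℝ => q * y + y ^ 2 / 8) (q + x * 2 / 8) x := by
      simpa [pow_one, mul_comm, mul_div_assoc] using h2.fun_add ((hasDerivAt_pow 2 x).div_const 8)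
    have := h1.fun_sub hlog
    convert this using 1
    · rfl
    · rfl
    rw [hF']; ring
  have hder' : ∀ x, HasDerivAt F' (1 / 4 - p * (q * exp x) / (p + q * exp x) ^ 2) x := by
    intro x
    have hφ : HasDerivAt (fun y : ℝ => p + q * exp y) (q * exp x) x :=
      (((Real.hasDerivAt_exp x).const_mul q).const_add p)
    have hnum : HasDerivAt (fun y : ℝ => q * exp y) (q * exp x) x :=
      (Real.hasDerivAt_exp x).const_mul q
    have hdiv : HasDerivAt (fun y => q * exp y / (p + q * exp y))
        ((q * exp x * (p + q * exp x) - q * exp x * (q * exp x)) / (p + q * exp x) ^ 2) x :=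
      hnum.div hφ (hφpos x).ne'
    have h1 : HasDerivAt (fun y : ℝ => q + y / 4) (1 / 4) x := by
      simpa using ((hasDerivAt_id x).div_const 4).const_add q
    have := h1.fun_sub hdiv
    convert this using 1
    · rfl
    · rfl
    have hnum' : q * exp x * (p + q * exp x) - q * exp x * (q * exp x) = p * (q * exp x) := by
      ring
    rw [hnum']
  have hF'0 : F' 0 = 0 := by
    rw [hF']
    simp only [exp_zero, mul_one, hpq]
    simp
  have hmono : Monotone F' := by
    apply monotone_of_deriv_nonneg
    · exact fun x => (hder' x).differentiableAt
    · intro x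
      rw [(hder' x).deriv]
      have h1 : p * (q * exp x) ≤ (p + q * exp x) ^ 2 / 4 := by
        nlinarith [sq_nonneg (p - q * exp x), exp_pos x]
      have h2 := hφpos x
      rw [sub_nonneg, div_le_div_iff₀ (by positivity) (by norm_num : (0:ℝ) < 4)]
      nlinarith
  have hF'nonneg : ∀ x, 0 ≤ x → 0 ≤ F' x := fun x hx => hF'0 ▸ hmono hx
  have hF'nonpos : ∀ x, x ≤ 0 → F' x ≤ 0 := fun x hx => hF'0 ▸ hmono hx
  have hF0 : F 0 = 0 := by
    rw [hF]
    simp only [exp_zero, mul_one, hpq]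
    simp
  have hcont : Continuous F := by
    rw [hF]
    fun_prop (disch := intro x; exact (hφpos x).ne')
  have hFnonneg : ∀ x, 0 ≤ F x := by
    intro x
    rcases le_or_gt 0 x with hx | hx
    · have hm : MonotoneOn F (Set.Ici (0:ℝ)) := by
        apply monotoneOn_of_deriv_nonneg (convex_Ici 0) hcont.continuousOn
        · intro y _
          exact (hder y).differentiableAt.differentiableWithinAt
        · intro y hy
          rw [(hder y).deriv]
          exact hF'nonneg y (le_of_lt (by simpa using hy))
      have := hm Set.self_mem_Ici (Set.mem_Ici.2 hx) hx
      rwa [hF0] at this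
    · have hm : AntitoneOn F (Set.Iic (0:ℝ)) := by
        apply antitoneOn_of_deriv_nonpos (convex_Iic 0) hcont.continuousOn
        · intro y _
          exact (hder y).differentiableAt.differentiableWithinAt
        · intro y hy
          rw [(hder y).deriv]
          exact hF'nonpos y (le_of_lt (by simpa using hy))
      have := hm (Set.mem_Iic.2 hx.le) Set.self_mem_Iic hx.le
      rwa [hF0] at this
  have hx := hFnonneg u
  rw [hF] at hx
  have hlog : Real.log (p + q * exp u) ≤ q * u + u ^ 2 / 8 := by linarith
  calc p + q * exp u = exp (Real.log (p + q * exp u)) := (exp_log (hφpos u)).symm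
    _ ≤ exp (q * u + u ^ 2 / 8) := exp_le_exp.2 hlog

lemma hoeffding_two_point (ℓ r μ lam : ℝ) (hlr : ℓ < r) (h1 : ℓ ≤ μ) (h2 : μ ≤ r) :
    (r - μ)/(r - ℓ) * exp (lam*ℓ) + (μ - ℓ)/(r - ℓ) * exp (lam*r)
      ≤ exp (lam*μ + lam^2*(r-ℓ)^2/8) := by
  have hrl : 0 < r - ℓ := by linarith
  set p := (r - μ)/(r - ℓ) with hp
  have hp0 : 0 ≤ p := div_nonneg (by linarith) hrl.le
  have hp1 : p ≤ 1 := by rw [hp, div_le_one hrl]; linarith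
  have h1p : 1 - p = (μ - ℓ)/(r - ℓ) := by rw [hp]; field_simp; ring
  have key := hoeffding_core p hp0 hp1 (lam*(r-ℓ))
  have e1 : exp (lam*ℓ) * exp (lam*(r-ℓ)) = exp (lam*r) := by rw [← exp_add]; ring_nf
  have e2 : lam*ℓ + ((1-p)*(lam*(r-ℓ)) + (lam*(r-ℓ))^2/8) = lam*μ + lam^2*(r-ℓ)^2/8 := by
    rw [h1p]; field_simp; ring
  rw [← h1p]
  calc p * exp (lam*ℓ) + (1-p) * exp (lam*r)
      = exp (lam*ℓ) * (p + (1-p)*exp (lam*(r-ℓ))) := by rw [← e1]; ring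
    _ ≤ exp (lam*ℓ) * exp ((1-p)*(lam*(r-ℓ)) + (lam*(r-ℓ))^2/8) :=
        mul_le_mul_of_nonneg_left key (exp_pos _).le
    _ = exp (lam*μ + lam^2*(r-ℓ)^2/8) := by rw [← exp_add, e2]

lemma exp_le_interp (ℓ r x lam : ℝ) (hlr : ℓ < r) (h1 : ℓ ≤ x) (h2 : x ≤ r) :
    exp (lam * x) ≤ (r - x)/(r-ℓ) * exp (lam*ℓ) + (x-ℓ)/(r-ℓ) * exp (lam*r) := by
  have hrl : 0 < r - ℓ := by linarith
  have ha : (0:ℝ) ≤ (r - x)/(r-ℓ) := div_nonneg (by linarith) hrl.le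
  have hb : (0:ℝ) ≤ (x - ℓ)/(r-ℓ) := div_nonneg (by linarith) hrl.le
  have hab : (r - x)/(r-ℓ) + (x - ℓ)/(r-ℓ) = 1 := by field_simp; ring
  have := convexOn_exp.2 (Set.mem_univ (lam*ℓ)) (Set.mem_univ (lam*r)) ha hb hab
  simp only [smul_eq_mul] at this
  have hx : (r - x)/(r-ℓ) * (lam*ℓ) + (x - ℓ)/(r-ℓ) * (lam*r) = lam * x := by
    rw [div_mul_eq_mul_div, div_mul_eq_mul_div, ← add_div, div_eq_iff hrl.ne']
    ring
  rwa [hx] at this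

open Finset in
lemma hoeffding_finite (n : ℕ) (hn : 1 ≤ n) (a : Fin n → ℝ) (ℓ r : ℝ) (hlr : ℓ < r)
    (hbound : ∀ j, ℓ ≤ a j ∧ a j ≤ r) (μ : ℝ) (hμ : μ * n = ∑ j, a j) (lam : ℝ) :
    ∑ k, exp (lam * a k) ≤ n * exp (lam*μ + lam^2*(r-ℓ)^2/8) := by
  have hrl : 0 < r - ℓ := by linarith
  have hnpos : (0:ℝ) < n := by exact_mod_cast hn
  have hμl : ℓ ≤ μ := by
    have h := Finset.sum_le_sum (fun j (_ : j ∈ univ) => (hbound j).1)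
    rw [← hμ] at h
    simp only [Finset.sum_const, card_univ, Fintype.card_fin, nsmul_eq_mul] at h
    nlinarith
  have hμr : μ ≤ r := by
    have h := Finset.sum_le_sum (fun j (_ : j ∈ univ) => (hbound j).2)
    rw [← hμ] at h
    simp only [Finset.sum_const, card_univ, Fintype.card_fin, nsmul_eq_mul] at h
    nlinarith
  calc ∑ k, exp (lam * a k)
      ≤ ∑ k : Fin n, ((r - a k)/(r-ℓ) * exp (lam*ℓ) + (a k-ℓ)/(r-ℓ) * exp (lam*r)) :=
        Finset.sum_le_sum fun k _ => exp_le_interp ℓ r (a k) lam hlr (hbound k).1 (hbound k).2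
    _ = (∑ k : Fin n, (r - a k)) * (exp (lam*ℓ)/(r-ℓ))
          + (∑ k : Fin n, (a k - ℓ)) * (exp (lam*r)/(r-ℓ)) := by
        rw [Finset.sum_add_distrib, Finset.sum_mul, Finset.sum_mul]
        congr 1 <;> exact Finset.sum_congr rfl fun k _ => by ring
    _ = (n*r - μ*n) * (exp (lam*ℓ)/(r-ℓ)) + (μ*n - n*ℓ) * (exp (lam*r)/(r-ℓ)) := by
        have s1 : ∑ k : Fin n, (r - a k) = n*r - μ*n := by
          rw [Finset.sum_sub_distrib, hμ]
          simp [mul_comm]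
        have s2 : ∑ k : Fin n, (a k - ℓ) = μ*n - n*ℓ := by
          rw [Finset.sum_sub_distrib, hμ]
          simp [mul_comm]
        rw [s1, s2]
    _ = n * ((r - μ)/(r-ℓ) * exp (lam*ℓ) + (μ-ℓ)/(r-ℓ) * exp (lam*r)) := by
        field_simp
    _ ≤ n * exp (lam*μ + lam^2*(r-ℓ)^2/8) := by
        apply mul_le_mul_of_nonneg_left _ hnpos.le
        exact hoeffding_two_point ℓ r μ lam hlr hμl hμr


open Finset

variable {α : Type*} [DecidableEq α]

noncomputable def Esym (b : α → ℝ) (i : ℕ) (s : Finset α) : ℝ :=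
  ∑ T ∈ s.powersetCard i, ∏ k ∈ T, b k

lemma Esym_nonneg {b : α → ℝ} {s : Finset α} (hb : ∀ k ∈ s, 0 ≤ b k) (i : ℕ) :
    0 ≤ Esym b i s := by
  apply Finset.sum_nonneg
  intro T hT
  exact Finset.prod_nonneg fun k hk => hb k ((Finset.mem_powersetCard.1 hT).1 hk)

lemma Esym_zero (b : α → ℝ) (s : Finset α) : Esym b 0 s = 1 := by
  simp [Esym]

lemma Esym_split {b : α → ℝ} {s : Finset α} {l : α} (hl : l ∈ s) (j : ℕ) :
    Esym b (j+1) s = Esym b (j+1) (s.erase l) + b l * Esym b j (s.erase l) := by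
  unfold Esym
  conv_lhs => rw [← Finset.insert_erase hl]
  rw [Finset.powersetCard_succ_insert (Finset.notMem_erase l s)]
  rw [Finset.sum_union]
  · congr 1
    rw [Finset.sum_image, Finset.mul_sum]
    · apply Finset.sum_congr rfl
      intro T hT
      have hlT : l ∉ T := fun h =>
        Finset.notMem_erase l s ((Finset.mem_powersetCard.1 hT).1 h)
      rw [Finset.prod_insert hlT]
    · intro T hT T' hT' h
      have hlT : l ∉ T := fun h =>
        Finset.notMem_erase l s ((Finset.mem_powersetCard.1 hT).1 h)
      have hlT' : l ∉ T' := fun h =>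
        Finset.notMem_erase l s ((Finset.mem_powersetCard.1 hT').1 h)
      rw [← Finset.erase_insert hlT, ← Finset.erase_insert hlT', h]
  · rw [Finset.disjoint_right]
    intro T hTimg hTleft
    obtain ⟨T', _, rfl⟩ := Finset.mem_image.1 hTimg
    have hmem : l ∈ insert l T' := Finset.mem_insert_self l T'
    exact Finset.notMem_erase l s ((Finset.mem_powersetCard.1 hTleft).1 hmem)

lemma Esym_erase_mono {b : α → ℝ} {s : Finset α} (hb : ∀ k ∈ s, 0 ≤ b k)
    {k l : α} (hk : k ∈ s) (hl : l ∈ s) (hbl : b k ≤ b l) (j : ℕ) :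
    Esym b j (s.erase l) ≤ Esym b j (s.erase k) := by
  rcases eq_or_ne k l with rfl | hne
  · exact le_refl _
  cases j with
  | zero => simp [Esym_zero]
  | succ m =>
    have hlk : l ∈ s.erase k := Finset.mem_erase.2 ⟨Ne.symm hne, hl⟩
    have hkl : k ∈ s.erase l := Finset.mem_erase.2 ⟨hne, hk⟩
    rw [Esym_split hlk m, Esym_split hkl m]
    have hcomm : (s.erase k).erase l = (s.erase l).erase k := by
      ext x; simp [Finset.mem_erase]; tauto
    rw [hcomm]
    have hE : 0 ≤ Esym b m ((s.erase l).erase k) :=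
      Esym_nonneg (fun x hx => hb x (Finset.mem_of_mem_erase (Finset.mem_of_mem_erase hx))) m
    nlinarith

lemma Esym_rec_mul {b : α → ℝ} {s : Finset α} (i : ℕ) :
    ∑ k ∈ s, b k * Esym b i (s.erase k) = (i+1 : ℝ) * Esym b (i+1) s := by
  have lhs_eq : ∑ k ∈ s, b k * Esym b i (s.erase k)
      = ∑ x ∈ s.sigma (fun k => (s.erase k).powersetCard i), b x.1 * ∏ k ∈ x.2, b k := by
    rw [Finset.sum_sigma]
    unfold Esym
    exact Finset.sum_congr rfl fun k _ => by rw [Finset.mul_sum]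
  have rhs_eq : (i+1 : ℝ) * Esym b (i+1) s
      = ∑ y ∈ (s.powersetCard (i+1)).sigma (fun U => U), b y.2 * ∏ k ∈ y.1.erase y.2, b k := by
    rw [Finset.sum_sigma]
    unfold Esym
    rw [Finset.mul_sum]
    apply Finset.sum_congr rfl
    intro U hU
    obtain ⟨hUs, hUcard⟩ := Finset.mem_powersetCard.1 hU
    have : ∀ k ∈ U, b k * ∏ x ∈ U.erase k, b x = ∏ x ∈ U, b x := fun k hk =>
      Finset.mul_prod_erase U b hk
    rw [Finset.sum_congr rfl this, Finset.sum_const, hUcard, nsmul_eq_mul]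
    push_cast
    ring
  rw [lhs_eq, rhs_eq]
  apply Finset.sum_bij' (fun x _ => (⟨insert x.1 x.2, x.1⟩ : (_ : Finset α) × α))
    (fun y _ => (⟨y.2, y.1.erase y.2⟩ : (_ : α) × Finset α))
  · rintro ⟨k, T⟩ hx
    obtain ⟨hk, hT⟩ := Finset.mem_sigma.1 hx
    obtain ⟨hTs, hTcard⟩ := Finset.mem_powersetCard.1 hT
    have hkT : k ∉ T := fun h => Finset.notMem_erase k s (hTs h)
    refine Finset.mem_sigma.2 ⟨Finset.mem_powersetCard.2 ⟨?_, ?_⟩, Finset.mem_insert_self _ _⟩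
    · intro x hx'
      rcases Finset.mem_insert.1 hx' with rfl | hx''
      · exact hk
      · exact Finset.mem_of_mem_erase (hTs hx'')
    · rw [Finset.card_insert_of_notMem hkT, hTcard]
  · rintro ⟨U, k⟩ hy
    obtain ⟨hU, hk⟩ := Finset.mem_sigma.1 hy
    obtain ⟨hUs, hUcard⟩ := Finset.mem_powersetCard.1 hU
    refine Finset.mem_sigma.2 ⟨hUs hk, Finset.mem_powersetCard.2 ⟨?_, ?_⟩⟩
    · intro x hx'
      obtain ⟨hxk, hxU⟩ := Finset.mem_erase.1 hx'
      exact Finset.mem_erase.2 ⟨hxk, hUs hxU⟩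
    · rw [Finset.card_erase_of_mem hk, hUcard]
      rfl
  · rintro ⟨k, T⟩ hx
    obtain ⟨hk, hT⟩ := Finset.mem_sigma.1 hx
    obtain ⟨hTs, _⟩ := Finset.mem_powersetCard.1 hT
    have hkT : k ∉ T := fun h => Finset.notMem_erase k s (hTs h)
    simp [Finset.erase_insert hkT]
  · rintro ⟨U, k⟩ hy
    obtain ⟨hU, hk⟩ := Finset.mem_sigma.1 hy
    simp [Finset.insert_erase hk]
  · rintro ⟨k, T⟩ hx
    obtain ⟨hk, hT⟩ := Finset.mem_sigma.1 hx
    obtain ⟨hTs, _⟩ := Finset.mem_powersetCard.1 hT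
    have hkT : k ∉ T := fun h => Finset.notMem_erase k s (hTs h)
    simp [Finset.erase_insert hkT]

lemma Esym_rec_count {b : α → ℝ} {s : Finset α} (i : ℕ) (hi : i ≤ s.card) :
    ∑ k ∈ s, Esym b i (s.erase k) = ((s.card - i : ℕ) : ℝ) * Esym b i s := by
  have lhs_eq : ∑ k ∈ s, Esym b i (s.erase k)
      = ∑ x ∈ s.sigma (fun k => (s.erase k).powersetCard i), ∏ k ∈ x.2, b k := by
    rw [Finset.sum_sigma]; rfl
  have rhs_eq : ((s.card - i : ℕ) : ℝ) * Esym b i s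
      = ∑ y ∈ (s.powersetCard i).sigma (fun T => s \ T), ∏ k ∈ y.1, b k := by
    rw [Finset.sum_sigma]
    unfold Esym
    rw [Finset.mul_sum]
    apply Finset.sum_congr rfl
    intro T hT
    obtain ⟨hTs, hTcard⟩ := Finset.mem_powersetCard.1 hT
    simp only [Finset.sum_const, Finset.card_sdiff_of_subset hTs, hTcard, nsmul_eq_mul]
  rw [lhs_eq, rhs_eq]
  apply Finset.sum_bij' (fun x _ => (⟨x.2, x.1⟩ : (_ : Finset α) × α))
    (fun y _ => (⟨y.2, y.1⟩ : (_ : α) × Finset α))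
  · rintro ⟨k, T⟩ hx
    obtain ⟨hk, hT⟩ := Finset.mem_sigma.1 hx
    obtain ⟨hTs, hTcard⟩ := Finset.mem_powersetCard.1 hT
    refine Finset.mem_sigma.2 ⟨Finset.mem_powersetCard.2
      ⟨fun x hx' => Finset.mem_of_mem_erase (hTs hx'), hTcard⟩, ?_⟩
    refine Finset.mem_sdiff.2 ⟨hk, fun h => Finset.notMem_erase k s (hTs h)⟩
  · rintro ⟨T, k⟩ hy
    obtain ⟨hT, hk⟩ := Finset.mem_sigma.1 hy
    obtain ⟨hTs, hTcard⟩ := Finset.mem_powersetCard.1 hT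
    obtain ⟨hks, hkT⟩ := Finset.mem_sdiff.1 hk
    refine Finset.mem_sigma.2 ⟨hks, Finset.mem_powersetCard.2 ⟨?_, hTcard⟩⟩
    intro x hx'
    refine Finset.mem_erase.2 ⟨?_, hTs hx'⟩
    intro h
    rw [h] at hx'
    exact hkT hx'
  · rintro ⟨k, T⟩ _; rfl
  · rintro ⟨T, k⟩ _; rfl
  · rintro ⟨k, T⟩ _; rfl

lemma maclaurin_weak {b : α → ℝ} : ∀ (i : ℕ) (s : Finset α), i ≤ s.card →
    (∀ k ∈ s, 0 ≤ b k) →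
    (s.card : ℝ)^i * Esym b i s ≤ (s.card.choose i : ℝ) * (∑ k ∈ s, b k)^i := by
  intro i
  induction i with
  | zero => intro s _ _; simp [Esym_zero]
  | succ i ih =>
    intro s hi hb
    have hbsum : 0 ≤ ∑ k ∈ s, b k := Finset.sum_nonneg hb
    have hanti : AntivaryOn b (fun k => Esym b i (s.erase k)) (s : Set α) := by
      intro k hk l hl hlt
      simp only at hlt
      by_contra hcon
      push_neg at hcon
      exact absurd (Esym_erase_mono hb (Finset.mem_coe.1 hk) (Finset.mem_coe.1 hl) hcon.le i)
        (not_le.2 hlt)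
    have cheb := hanti.card_mul_sum_le_sum_mul_sum
    rw [Esym_rec_mul i, Esym_rec_count i (le_trans (Nat.le_succ i) hi)] at cheb
    -- cheb : #s * ((i+1) * Esym (i+1) s) ≤ (∑ b) * ((#s - i) * Esym i s)
    have ihs := ih s (le_trans (Nat.le_succ i) hi) hb
    have hcard : (0:ℝ) ≤ (s.card : ℝ) := Nat.cast_nonneg _
    have key : ((i:ℝ)+1) * ((s.card : ℝ)^(i+1) * Esym b (i+1) s)
        ≤ ((i:ℝ)+1) * ((s.card.choose (i+1) : ℝ) * (∑ k ∈ s, b k)^(i+1)) := by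
      have step1 : ((i:ℝ)+1) * ((s.card : ℝ)^(i+1) * Esym b (i+1) s)
          = (s.card : ℝ)^i * ((s.card : ℝ) * (((i:ℝ)+1) * Esym b (i+1) s)) := by ring
      have step2 : (s.card : ℝ)^i * ((s.card : ℝ) * (((i:ℝ)+1) * Esym b (i+1) s))
          ≤ (s.card : ℝ)^i * ((∑ k ∈ s, b k) * (((s.card - i : ℕ):ℝ) * Esym b i s)) := by
        apply mul_le_mul_of_nonneg_left _ (pow_nonneg hcard i)
        exact cheb
      have step3 : (s.card : ℝ)^i * ((∑ k ∈ s, b k) * (((s.card - i : ℕ):ℝ) * Esym b i s))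
          = ((s.card - i : ℕ):ℝ) * (∑ k ∈ s, b k) * ((s.card : ℝ)^i * Esym b i s) := by ring
      have step4 : ((s.card - i : ℕ):ℝ) * (∑ k ∈ s, b k) * ((s.card : ℝ)^i * Esym b i s)
          ≤ ((s.card - i : ℕ):ℝ) * (∑ k ∈ s, b k)
              * ((s.card.choose i : ℝ) * (∑ k ∈ s, b k)^i) := by
        apply mul_le_mul_of_nonneg_left ihs
        positivity
      have hchoose : (s.card.choose (i+1) : ℝ) * ((i:ℝ)+1)
          = (s.card.choose i : ℝ) * ((s.card - i : ℕ):ℝ) := by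
        have := Nat.choose_succ_right_eq s.card i
        exact_mod_cast congrArg (Nat.cast (R := ℝ)) this
      have step5 : ((s.card - i : ℕ):ℝ) * (∑ k ∈ s, b k)
              * ((s.card.choose i : ℝ) * (∑ k ∈ s, b k)^i)
          = ((i:ℝ)+1) * ((s.card.choose (i+1) : ℝ) * (∑ k ∈ s, b k)^(i+1)) := by
        rw [pow_succ]
        linear_combination (-(∑ k ∈ s, b k)^i * (∑ k ∈ s, b k)) * hchoose
      linarith
    have hpos : (0:ℝ) < (i:ℝ)+1 := by positivity
    exact le_of_mul_le_mul_left key hpos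


open Finset


-- existence of a permutation mapping J onto T
lemma exists_perm_image {n : ℕ} {J T : Finset (Fin n)} (h : J.card = T.card) :
    ∃ pe : Equiv.Perm (Fin n), J.image pe = T := by
  classical
  have e1 : {x // x ∈ J} ≃ {x // x ∈ T} := by
    apply Fintype.equivOfCardEq
    simpa [Fintype.card_coe] using h
  have e2 : {x // ¬ x ∈ J} ≃ {x // ¬ x ∈ T} := by
    apply Fintype.equivOfCardEq
    rw [Fintype.card_subtype_compl, Fintype.card_subtype_compl]
    simp [Fintype.card_coe, h]
  refine ⟨(Equiv.sumCompl (· ∈ J)).symm.trans ((e1.sumCongr e2).trans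
    (Equiv.sumCompl (· ∈ T))), ?_⟩
  have hsub : J.image ((Equiv.sumCompl (· ∈ J)).symm.trans ((e1.sumCongr e2).trans
      (Equiv.sumCompl (· ∈ T)))) ⊆ T := by
    intro y hy
    obtain ⟨x, hx, rfl⟩ := Finset.mem_image.1 hy
    simp only [Equiv.trans_apply]
    rw [Equiv.sumCompl_symm_apply_of_pos (p := (· ∈ J)) hx]
    simp only [Equiv.sumCongr_apply, Sum.map_inl, Equiv.sumCompl_apply_inl]
    exact (e1 ⟨x, hx⟩).2
  apply Finset.eq_of_subset_of_card_le hsub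
  rw [Finset.card_image_of_injective _ (Equiv.injective _)]
  exact h.ge


lemma perm_image_trans {n : ℕ} (J : Finset (Fin n)) (σ ρ : Equiv.Perm (Fin n)) :
    J.image (σ.trans ρ) = (J.image σ).image ρ := by
  rw [Finset.image_image]; rfl

lemma perm_fiber_card_const {n : ℕ} (J T : Finset (Fin n)) (hT : J.card = T.card) :
    (univ.filter (fun σ : Equiv.Perm (Fin n) => J.image σ = T)).card
      = (univ.filter (fun σ : Equiv.Perm (Fin n) => J.image σ = J)).card := by
  classical
  obtain ⟨pe, hpe⟩ := exists_perm_image hT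
  have hTJ : T.image pe.symm = J := by
    rw [← hpe, Finset.image_image]
    simp
  refine Finset.card_bij' (fun σ _ => σ.trans pe.symm) (fun σ _ => σ.trans pe) ?_ ?_ ?_ ?_
  · intro σ hσ
    rw [Finset.mem_filter] at hσ ⊢
    refine ⟨Finset.mem_univ _, ?_⟩
    rw [perm_image_trans, hσ.2, hTJ]
  · intro σ hσ
    rw [Finset.mem_filter] at hσ ⊢
    refine ⟨Finset.mem_univ _, ?_⟩
    rw [perm_image_trans, hσ.2, hpe]
  · intro σ _
    ext x
    simp
  · intro σ _
    ext x
    simp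

lemma perm_sum_eq {n : ℕ} (b : Fin n → ℝ) (J : Finset (Fin n)) :
    (∑ σ : Equiv.Perm (Fin n), ∏ j ∈ J, b (σ j)) * (n.choose J.card : ℝ)
      = (Fintype.card (Equiv.Perm (Fin n)) : ℝ) * Esym b J.card univ := by
  classical
  set i := J.card with hi
  set c := (univ.filter (fun σ : Equiv.Perm (Fin n) => J.image σ = J)).card with hc
  have hmaps : ∀ σ : Equiv.Perm (Fin n), σ ∈ (univ : Finset (Equiv.Perm (Fin n))) →
      J.image σ ∈ (univ : Finset (Fin n)).powersetCard i := by
    intro σ _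
    refine Finset.mem_powersetCard.2 ⟨Finset.subset_univ _, ?_⟩
    rw [Finset.card_image_of_injective _ (Equiv.injective σ), hi]
  have hfiber : ∀ T ∈ (univ : Finset (Fin n)).powersetCard i,
      (univ.filter (fun σ : Equiv.Perm (Fin n) => J.image σ = T)).card = c := by
    intro T hT
    exact perm_fiber_card_const J T
      (by rw [← hi, (Finset.mem_powersetCard.1 hT).2])
  -- total count
  have htotal : (Fintype.card (Equiv.Perm (Fin n)) : ℕ) = (n.choose i) * c := by
    rw [← Finset.card_univ]
    rw [Finset.card_eq_sum_card_fiberwise hmaps]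
    rw [Finset.sum_congr rfl hfiber, Finset.sum_const, smul_eq_mul,
      Finset.card_powersetCard, Finset.card_univ, Fintype.card_fin]
  -- sum identity
  have hsum : (∑ σ : Equiv.Perm (Fin n), ∏ j ∈ J, b (σ j)) = c * Esym b i univ := by
    have h1 : ∀ σ : Equiv.Perm (Fin n), ∏ j ∈ J, b (σ j) = ∏ k ∈ J.image σ, b k := by
      intro σ
      rw [Finset.prod_image (fun x _ y _ h => Equiv.injective σ h)]
    calc ∑ σ : Equiv.Perm (Fin n), ∏ j ∈ J, b (σ j)
        = ∑ σ : Equiv.Perm (Fin n), ∏ k ∈ J.image σ, b k :=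
          Finset.sum_congr rfl fun σ _ => h1 σ
      _ = ∑ T ∈ (univ : Finset (Fin n)).powersetCard i,
            ∑ σ ∈ univ.filter (fun σ : Equiv.Perm (Fin n) => J.image σ = T),
              ∏ k ∈ J.image σ, b k :=
          (Finset.sum_fiberwise_of_maps_to hmaps _).symm
      _ = ∑ T ∈ (univ : Finset (Fin n)).powersetCard i, (c : ℝ) * ∏ k ∈ T, b k := by
          apply Finset.sum_congr rfl
          intro T hT
          rw [Finset.sum_congr rfl (fun σ hσ => by
            rw [(Finset.mem_filter.1 hσ).2]), Finset.sum_const, hfiber T hT, nsmul_eq_mul]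
      _ = c * Esym b i univ := by rw [← Finset.mul_sum]; rfl
  rw [hsum]
  have : (Fintype.card (Equiv.Perm (Fin n)) : ℝ) = (n.choose i : ℝ) * c := by
    exact_mod_cast congrArg (Nat.cast (R := ℝ)) htotal
  rw [this]
  ring


open Finset Real in
lemma tail_bound (n : ℕ) (a : Fin n → ℝ) (ℓ r : ℝ) (hlr : ℓ < r)
    (hbound : ∀ j, ℓ ≤ a j ∧ a j ≤ r) (μ : ℝ) (hμ : μ * n = ∑ j, a j)
    (hn : 1 ≤ n) (i : ℕ) (t : ℝ) (ht : 0 < t) (J : Finset (Fin n)) (hJ : J.card = i) :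
    ((univ.filter (fun σ : Equiv.Perm (Fin n) =>
        t * i ≤ (∑ j ∈ J, a (σ j)) - μ * i)).card : ℝ)
      ≤ (Fintype.card (Equiv.Perm (Fin n)) : ℝ)
        * Real.exp (-(2 * i * t ^ 2) / (r - ℓ) ^ 2) := by
  classical
  have hrl : (0:ℝ) < r - ℓ := by linarith
  set lam : ℝ := 4 * t / (r - ℓ)^2 with hlam
  have hlampos : 0 < lam := by positivity
  set b : Fin n → ℝ := fun k => exp (lam * a k) with hb
  have hbpos : ∀ k, 0 < b k := fun k => exp_pos _
  set N : ℝ := (Fintype.card (Equiv.Perm (Fin n)) : ℝ) with hN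
  have hNpos : 0 < N := by
    rw [hN]
    exact_mod_cast Fintype.card_pos
  set E : ℝ := exp (lam * μ + lam^2 * (r-ℓ)^2 / 8) with hE
  have chernoff : ((univ.filter (fun σ : Equiv.Perm (Fin n) =>
        t * i ≤ (∑ j ∈ J, a (σ j)) - μ * i)).card : ℝ) * exp (lam * (t*i + μ*i))
      ≤ ∑ σ : Equiv.Perm (Fin n), ∏ j ∈ J, b (σ j) := by
    have h1 : ∀ σ ∈ univ.filter (fun σ : Equiv.Perm (Fin n) =>
        t * i ≤ (∑ j ∈ J, a (σ j)) - μ * i),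
        exp (lam * (t*i + μ*i)) ≤ ∏ j ∈ J, b (σ j) := by
      intro σ hσ
      have h2 := (Finset.mem_filter.1 hσ).2
      have h3 : lam * (t*i + μ*i) ≤ lam * (∑ j ∈ J, a (σ j)) := by
        apply mul_le_mul_of_nonneg_left _ hlampos.le
        linarith
      calc exp (lam * (t*i + μ*i)) ≤ exp (lam * ∑ j ∈ J, a (σ j)) := exp_le_exp.2 h3
        _ = ∏ j ∈ J, b (σ j) := by rw [Finset.mul_sum, Real.exp_sum]
    calc ((univ.filter (fun σ : Equiv.Perm (Fin n) =>
            t * i ≤ (∑ j ∈ J, a (σ j)) - μ * i)).card : ℝ) * exp (lam * (t*i + μ*i))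
        = ∑ _σ ∈ univ.filter (fun σ : Equiv.Perm (Fin n) =>
            t * i ≤ (∑ j ∈ J, a (σ j)) - μ * i), exp (lam * (t*i + μ*i)) := by
          rw [Finset.sum_const, nsmul_eq_mul]
      _ ≤ ∑ σ ∈ univ.filter (fun σ : Equiv.Perm (Fin n) =>
            t * i ≤ (∑ j ∈ J, a (σ j)) - μ * i), ∏ j ∈ J, b (σ j) :=
          Finset.sum_le_sum h1
      _ ≤ ∑ σ : Equiv.Perm (Fin n), ∏ j ∈ J, b (σ j) := by
          apply Finset.sum_le_sum_of_subset_of_nonneg (Finset.filter_subset _ _)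
          intro σ _ _
          exact Finset.prod_nonneg fun j _ => (hbpos _).le
  have hperm := perm_sum_eq b J
  rw [hJ] at hperm
  have hin : i ≤ n := by
    rw [← hJ]
    calc J.card ≤ (univ : Finset (Fin n)).card := Finset.card_le_univ J
      _ = n := by rw [Finset.card_univ, Fintype.card_fin]
  have hmac := maclaurin_weak (b := b) i (univ : Finset (Fin n))
    (by rw [Finset.card_univ, Fintype.card_fin]; exact hin)
    (fun k _ => (hbpos k).le)
  rw [Finset.card_univ, Fintype.card_fin] at hmac
  have hfin := hoeffding_finite n hn a ℓ r hlr hbound μ hμ lam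
  have hnpos : (0:ℝ) < n := by exact_mod_cast hn
  have hsumb : (∑ k, b k) ^ i ≤ ((n:ℝ) * E)^i := by
    apply pow_le_pow_left₀ (Finset.sum_nonneg fun k _ => (hbpos k).le)
    exact hfin
  have hchoosepos : (0:ℝ) < (n.choose i : ℝ) := by
    exact_mod_cast Nat.choose_pos hin
  have hmgf : (∑ σ : Equiv.Perm (Fin n), ∏ j ∈ J, b (σ j)) ≤ N * E^i := by
    have key : (∑ σ : Equiv.Perm (Fin n), ∏ j ∈ J, b (σ j)) * ((n.choose i : ℝ) * (n:ℝ)^i)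
        ≤ (N * E^i) * ((n.choose i : ℝ) * (n:ℝ)^i) := by
      calc (∑ σ : Equiv.Perm (Fin n), ∏ j ∈ J, b (σ j)) * ((n.choose i : ℝ) * (n:ℝ)^i)
          = (N * Esym b i univ) * (n:ℝ)^i := by rw [← hperm]; ring
        _ = N * ((n:ℝ)^i * Esym b i univ) := by ring
        _ ≤ N * ((n.choose i : ℝ) * (∑ k, b k)^i) :=
            mul_le_mul_of_nonneg_left hmac hNpos.le
        _ ≤ N * ((n.choose i : ℝ) * ((n:ℝ) * E)^i) :=
            mul_le_mul_of_nonneg_left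
              (mul_le_mul_of_nonneg_left hsumb hchoosepos.le) hNpos.le
        _ = (N * E^i) * ((n.choose i : ℝ) * (n:ℝ)^i) := by rw [mul_pow]; ring
    have hpos : (0:ℝ) < (n.choose i : ℝ) * (n:ℝ)^i := by positivity
    exact le_of_mul_le_mul_right key hpos
  have hcomb := le_trans chernoff hmgf
  have hEi : E^i = exp ((i:ℝ) * (lam * μ + lam^2 * (r-ℓ)^2 / 8)) := by
    rw [hE, ← Real.exp_nat_mul]
  have hexp_eq : (i:ℝ) * (lam * μ + lam^2 * (r-ℓ)^2 / 8) - lam * (t*i + μ*i)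
      = -(2 * i * t ^ 2) / (r - ℓ) ^ 2 := by
    rw [hlam]
    field_simp
    ring
  have final : ((univ.filter (fun σ : Equiv.Perm (Fin n) =>
        t * i ≤ (∑ j ∈ J, a (σ j)) - μ * i)).card : ℝ)
      ≤ N * E^i / exp (lam * (t*i + μ*i)) := by
    rw [le_div_iff₀ (exp_pos _)]
    exact hcomb
  calc ((univ.filter (fun σ : Equiv.Perm (Fin n) =>
        t * i ≤ (∑ j ∈ J, a (σ j)) - μ * i)).card : ℝ)
      ≤ N * E^i / exp (lam * (t*i + μ*i)) := final
    _ = N * exp (-(2 * i * t ^ 2) / (r - ℓ) ^ 2) := by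
        rw [mul_div_assoc, hEi, ← Real.exp_sub, hexp_eq]

open Finset in
/-- **Hoeffding's inequality for sampling without replacement.**
Given reals `a 1, …, a n` with `ℓ ≤ a j ≤ r` and mean `μ`, if `σ` is a
uniformly random permutation of `{1, …, n}` (so that the first `i` values
`a (σ 1), …, a (σ i)` form a random sample of size `i` without replacement),
then for every `1 ≤ i ≤ n` and `t > 0`,
`Pr[ |∑_{j=1}^i a (σ j) − μ i| ≥ t i ] ≤ 2 exp (−2 i t² / (r − ℓ)²)`.
The probability is a counting quotient over all `n!` permutations. -/
theorem hoeffding_sampling_without_replacement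
    (n : ℕ) (hn : 1 ≤ n) (a : Fin n → ℝ) (ℓ r : ℝ) (hlr : ℓ < r)
    (hbound : ∀ j, ℓ ≤ a j ∧ a j ≤ r)
    (μ : ℝ) (hμ : μ = (∑ j, a j) / n)
    (i : ℕ) (hi1 : 1 ≤ i) (hin : i ≤ n) (t : ℝ) (ht : 0 < t) :
    ((univ.filter (fun σ : Equiv.Perm (Fin n) =>
        t * i ≤ |(∑ j ∈ univ.filter (fun j : Fin n => (j : ℕ) < i), a (σ j))
                  - μ * i|)).card : ℝ)
      / (Fintype.card (Equiv.Perm (Fin n)) : ℝ)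
      ≤ 2 * Real.exp (-(2 * i * t ^ 2) / (r - ℓ) ^ 2) := by
  classical
  have hnpos : (0:ℝ) < n := by exact_mod_cast hn
  have hμn : μ * n = ∑ j, a j := by rw [hμ]; field_simp
  set J : Finset (Fin n) := univ.filter (fun j : Fin n => (j : ℕ) < i) with hJdef
  have hJcard : J.card = i := by
    rw [hJdef]
    have : univ.filter (fun j : Fin n => (j : ℕ) < i)
        = (univ : Finset (Fin i)).map (Fin.castLEEmb hin) := by
      ext x
      simp only [Finset.mem_filter, Finset.mem_univ, true_and, Finset.mem_map,
        Fin.castLEEmb_apply]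
      constructor
      · intro hx
        exact ⟨⟨(x : ℕ), hx⟩, by ext; simp⟩
      · rintro ⟨y, rfl⟩
        simpa using y.2
    rw [this, Finset.card_map, Finset.card_univ, Fintype.card_fin]
  set N : ℝ := (Fintype.card (Equiv.Perm (Fin n)) : ℝ) with hN
  have hNpos : 0 < N := by
    rw [hN]
    exact_mod_cast Fintype.card_pos
  -- upper tail
  have hup := tail_bound n a ℓ r hlr hbound μ hμn hn i t ht J hJcard
  -- lower tail, via negation
  have hboundneg : ∀ j, -r ≤ -(a j) ∧ -(a j) ≤ -ℓ := fun j =>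
    ⟨by linarith [(hbound j).2], by linarith [(hbound j).1]⟩
  have hμneg : (-μ) * n = ∑ j, -(a j) := by
    rw [Finset.sum_neg_distrib, ← hμn]; ring
  have hlo := tail_bound n (fun k => -(a k)) (-r) (-ℓ) (by linarith) hboundneg
    (-μ) hμneg hn i t ht J hJcard
  have hexp2 : (-ℓ - -r)^2 = (r - ℓ)^2 := by ring
  rw [hexp2] at hlo
  have hlo' : ((univ.filter (fun σ : Equiv.Perm (Fin n) =>
      t * i ≤ μ * i - ∑ j ∈ J, a (σ j))).card : ℝ)
      ≤ N * Real.exp (-(2 * i * t ^ 2) / (r - ℓ) ^ 2) := by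
    have hfeq : univ.filter (fun σ : Equiv.Perm (Fin n) =>
        t * i ≤ μ * i - ∑ j ∈ J, a (σ j))
        = univ.filter (fun σ : Equiv.Perm (Fin n) =>
        t * i ≤ (∑ j ∈ J, -(a (σ j))) - (-μ) * i) := by
      apply Finset.filter_congr
      intro σ _
      rw [Finset.sum_neg_distrib]
      constructor <;> intro <;> linarith
    rw [hfeq]
    exact hlo
  -- union bound
  have hsubset : univ.filter (fun σ : Equiv.Perm (Fin n) =>
        t * i ≤ |(∑ j ∈ J, a (σ j)) - μ * i|)
      ⊆ (univ.filter (fun σ : Equiv.Perm (Fin n) =>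
        t * i ≤ (∑ j ∈ J, a (σ j)) - μ * i))
        ∪ (univ.filter (fun σ : Equiv.Perm (Fin n) =>
        t * i ≤ μ * i - ∑ j ∈ J, a (σ j))) := by
    intro σ hσ
    obtain ⟨-, h2⟩ := Finset.mem_filter.1 hσ
    rcases abs_cases ((∑ j ∈ J, a (σ j)) - μ * i) with ⟨heq, -⟩ | ⟨heq, -⟩
    · exact Finset.mem_union_left _ (Finset.mem_filter.2 ⟨Finset.mem_univ _, by linarith⟩)
    · exact Finset.mem_union_right _ (Finset.mem_filter.2 ⟨Finset.mem_univ _, by linarith⟩)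
  have hcard : ((univ.filter (fun σ : Equiv.Perm (Fin n) =>
        t * i ≤ |(∑ j ∈ J, a (σ j)) - μ * i|)).card : ℝ)
      ≤ 2 * (N * Real.exp (-(2 * i * t ^ 2) / (r - ℓ) ^ 2)) := by
    have h1 := Finset.card_le_card hsubset
    have h2 := Finset.card_union_le
      (univ.filter (fun σ : Equiv.Perm (Fin n) => t * i ≤ (∑ j ∈ J, a (σ j)) - μ * i))
      (univ.filter (fun σ : Equiv.Perm (Fin n) => t * i ≤ μ * i - ∑ j ∈ J, a (σ j)))
    have h3 : ((univ.filter (fun σ : Equiv.Perm (Fin n) =>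
        t * i ≤ |(∑ j ∈ J, a (σ j)) - μ * i|)).card : ℝ)
        ≤ ((univ.filter (fun σ : Equiv.Perm (Fin n) =>
          t * i ≤ (∑ j ∈ J, a (σ j)) - μ * i)).card : ℝ)
          + ((univ.filter (fun σ : Equiv.Perm (Fin n) =>
          t * i ≤ μ * i - ∑ j ∈ J, a (σ j))).card : ℝ) := by
      exact_mod_cast le_trans h1 h2
    linarith
  rw [div_le_iff₀ hNpos]
  calc ((univ.filter (fun σ : Equiv.Perm (Fin n) =>
        t * i ≤ |(∑ j ∈ J, a (σ j)) - μ * i|)).card : ℝ)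
      ≤ 2 * (N * Real.exp (-(2 * i * t ^ 2) / (r - ℓ) ^ 2)) := hcard
    _ = 2 * Real.exp (-(2 * i * t ^ 2) / (r - ℓ) ^ 2) * N := by ring
end

section
/- Let n ≥ 2, let c > 0, and let a_1, ..., a_n be real numbers with 0 ≤ a_j ≤ c for all j, and let μ = (a_1 + ... + a_n)/n. Let σ be a uniformly random permutation of {1, ..., n}. Then the probability that there exists some i ∈ {1, ..., n} with |Σ_{j=1}^i a_{σ(j)} − μ·i| ≥ c·√(i·ln n) is at most 2/n. -/
open Finset

lemma hoeff_core {p : ℝ} (hp0 : 0 ≤ p) (hp1 : p ≤ 1) (h : ℝ) :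
    1 - p + p * Real.exp h ≤ Real.exp (p * h + h ^ 2 / 8) := by
  set D : ℝ → ℝ := fun x => 1 - p + p * Real.exp x with hDdef
  have hDpos : ∀ x, 0 < D x := by
    intro x
    show 0 < 1 - p + p * Real.exp x
    rcases le_total 1 (Real.exp x) with hx | hx
    · nlinarith [Real.exp_pos x]
    · nlinarith [Real.exp_pos x]
  have hD : ∀ x, HasDerivAt D (p * Real.exp x) x := by
    intro x
    exact ((Real.hasDerivAt_exp x).const_mul p).const_add (1 - p)
  set G' : ℝ → ℝ := fun x => p + x / 4 - p * Real.exp x / D x with hG'def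
  have hG'deriv : ∀ x, HasDerivAt G'
      (1 / 4 - p * Real.exp x * (1 - p) / (D x) ^ 2) x := by
    intro x
    have h1 : HasDerivAt (fun x => p * Real.exp x) (p * Real.exp x) x :=
      (Real.hasDerivAt_exp x).const_mul p
    have h2 : HasDerivAt (fun x => p * Real.exp x / D x)
        ((p * Real.exp x * D x - p * Real.exp x * (p * Real.exp x)) / (D x) ^ 2) x :=
      h1.div (hD x) (hDpos x).ne'
    have h3 : HasDerivAt (fun x => p + x / 4) (1 / 4) x := by
      simpa using ((hasDerivAt_id x).div_const 4).const_add p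
    have := h3.sub h2
    refine this.congr_deriv ?_
    have hne : (D x) ≠ 0 := (hDpos x).ne'
    simp only [hDdef]
    ring
  have hG'mono : Monotone G' := by
    apply monotone_of_deriv_nonneg
    · exact fun x => (hG'deriv x).differentiableAt
    · intro x
      rw [(hG'deriv x).deriv]
      have hne : (0:ℝ) < (D x) ^ 2 := pow_pos (hDpos x) 2
      rw [sub_nonneg, div_le_iff₀ hne]
      have : D x = 1 - p + p * Real.exp x := rfl
      nlinarith [Real.exp_pos x, sq_nonneg (1 - p - p * Real.exp x)]
  set G : ℝ → ℝ := fun x => p * x + x ^ 2 / 8 - Real.log (D x) with hGdef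
  have hG : ∀ x, HasDerivAt G (G' x) x := by
    intro x
    have h1 : HasDerivAt (fun x : ℝ => p * x + x ^ 2 / 8) (p + x / 4) x := by
      have := ((hasDerivAt_pow 2 x).div_const 8).const_add (p * x)
      -- not right shape; build directly
      have ha : HasDerivAt (fun x : ℝ => p * x) p x := by
        simpa using (hasDerivAt_id x).const_mul p
      have hb : HasDerivAt (fun x : ℝ => x ^ 2 / 8) (x / 4) x := by
        have := (hasDerivAt_pow 2 x).div_const 8
        exact this.congr_deriv (by norm_num; ring)
      exact ha.add hb
    have h2 : HasDerivAt (fun x => Real.log (D x)) (p * Real.exp x / D x) x :=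
      (hD x).log (hDpos x).ne'
    exact h1.sub h2
  have hG0 : G 0 = 0 := by
    simp only [hGdef, hDdef]
    norm_num
  have hG'0 : G' 0 = 0 := by
    simp only [hG'def, hDdef]
    norm_num
  have key : 0 ≤ G h := by
    rcases le_total 0 h with hh | hh
    · have hmono : MonotoneOn G (Set.Ici 0) := by
        apply monotoneOn_of_deriv_nonneg (convex_Ici 0)
        · exact (fun x _ => ((hG x).differentiableAt.continuousAt.continuousWithinAt))
        · exact fun x _ => (hG x).differentiableAt.differentiableWithinAt
        · intro x hx
          rw [(hG x).deriv]
          rw [← hG'0]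
          exact hG'mono (le_of_lt (by simpa using hx))
      have := hmono (Set.self_mem_Ici) (Set.mem_Ici.2 hh) hh
      rwa [hG0] at this
    · have hanti : AntitoneOn G (Set.Iic 0) := by
        apply antitoneOn_of_deriv_nonpos (convex_Iic 0)
        · exact (fun x _ => ((hG x).differentiableAt.continuousAt.continuousWithinAt))
        · exact fun x _ => (hG x).differentiableAt.differentiableWithinAt
        · intro x hx
          rw [(hG x).deriv]
          rw [← hG'0]
          exact hG'mono (le_of_lt (by simpa using hx))
      have := hanti (Set.mem_Iic.2 hh) (Set.self_mem_Iic) hh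
      rwa [hG0] at this
  have hlog : Real.log (D h) ≤ p * h + h ^ 2 / 8 := by
    have h2 : 0 ≤ p * h + h ^ 2 / 8 - Real.log (D h) := key
    linarith
  calc D h = Real.exp (Real.log (D h)) := (Real.exp_log (hDpos h)).symm
    _ ≤ Real.exp (p * h + h ^ 2 / 8) := Real.exp_le_exp.2 hlog

lemma hoeff_finset {ι : Type*} (S : Finset ι) (v : ι → ℝ) {c : ℝ} (hc : 0 < c)
    (hv : ∀ x ∈ S, 0 ≤ v x ∧ v x ≤ c) (t : ℝ) :
    ∑ x ∈ S, Real.exp (t * (v x - (∑ y ∈ S, v y) / S.card)) ≤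
      (S.card : ℝ) * Real.exp (t ^ 2 * c ^ 2 / 8) := by
  rcases S.eq_empty_or_nonempty with rfl | hS
  · simp
  have hN : (0 : ℝ) < S.card := by exact_mod_cast card_pos.mpr hS
  set m : ℝ := (∑ y ∈ S, v y) / S.card with hm
  have hSv : ∑ y ∈ S, v y = S.card * m := by
    rw [hm]; field_simp
  have hm0 : 0 ≤ m := by
    apply div_nonneg _ hN.le
    exact sum_nonneg fun x hx => (hv x hx).1
  have hmc : m ≤ c := by
    rw [hm, div_le_iff₀ hN]
    calc ∑ y ∈ S, v y ≤ ∑ y ∈ S, c := sum_le_sum fun x hx => (hv x hx).2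
      _ = S.card * c := by rw [sum_const, nsmul_eq_mul]
      _ = c * S.card := by ring
  set p : ℝ := m / c with hp
  have hp0 : 0 ≤ p := div_nonneg hm0 hc.le
  have hp1 : p ≤ 1 := (div_le_one hc).2 hmc
  have hpc : p * c = m := by rw [hp]; field_simp
  have hpt : ∀ x ∈ S, Real.exp (t * v x) ≤ (1 - v x / c) + (v x / c) * Real.exp (t * c) := by
    intro x hx
    set θ : ℝ := v x / c with hθ
    have hθ0 : 0 ≤ θ := div_nonneg (hv x hx).1 hc.le
    have hθ1 : θ ≤ 1 := (div_le_one hc).2 (hv x hx).2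
    have hθc : θ * c = v x := by rw [hθ]; field_simp
    have := convexOn_exp.2 (Set.mem_univ (0 : ℝ)) (Set.mem_univ (t * c))
      (by linarith : (0:ℝ) ≤ 1 - θ) hθ0 (by ring)
    simp only [smul_eq_mul, mul_zero, zero_add, Real.exp_zero, mul_one] at this
    calc Real.exp (t * v x) = Real.exp (θ * (t * c)) := by rw [← hθc]; ring_nf
      _ ≤ (1 - θ) * 1 + θ * Real.exp (t * c) := by simpa using this
      _ = (1 - θ) + θ * Real.exp (t * c) := by ring
  calc ∑ x ∈ S, Real.exp (t * (v x - m))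
      = (∑ x ∈ S, Real.exp (t * v x)) * Real.exp (-(t * m)) := by
        rw [sum_mul]
        exact sum_congr rfl fun x _ => by rw [← Real.exp_add]; ring_nf
    _ ≤ (∑ x ∈ S, ((1 - v x / c) + (v x / c) * Real.exp (t * c))) * Real.exp (-(t * m)) := by
        apply mul_le_mul_of_nonneg_right _ (Real.exp_pos _).le
        exact sum_le_sum hpt
    _ = (S.card : ℝ) * (1 - p + p * Real.exp (t * c)) * Real.exp (-(t * m)) := by
        rw [sum_add_distrib, sum_sub_distrib, sum_const, ← sum_div, ← sum_mul, ← sum_div, hSv]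
        simp only [nsmul_eq_mul, mul_one]
        rw [hp]
        ring
    _ ≤ (S.card : ℝ) * Real.exp (p * (t * c) + (t * c) ^ 2 / 8) * Real.exp (-(t * m)) := by
        apply mul_le_mul_of_nonneg_right _ (Real.exp_pos _).le
        exact mul_le_mul_of_nonneg_left (hoeff_core hp0 hp1 (t * c)) hN.le
    _ = (S.card : ℝ) * Real.exp (t ^ 2 * c ^ 2 / 8) := by
        rw [mul_assoc, ← Real.exp_add]
        congr 2
        have : p * (t * c) = t * m := by rw [← hpc]; ring
        rw [this]; ring

lemma count_ident {α : Type*} [DecidableEq α] (S : Finset α) (m : ℕ) (f : Finset α → ℝ) :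
    ((m + 1 : ℕ) : ℝ) * ∑ T ∈ S.powersetCard (m + 1), f T
      = ∑ x ∈ S, ∑ T ∈ (S.erase x).powersetCard m, f (insert x T) := by
  rw [mul_sum]
  have h1 : ∀ T ∈ S.powersetCard (m + 1), ((m + 1 : ℕ) : ℝ) * f T = ∑ _x ∈ T, f T := by
    intro T hT
    rw [sum_const, nsmul_eq_mul, (mem_powersetCard.1 hT).2]
  rw [sum_congr rfl h1, sum_sigma', sum_sigma']
  apply Finset.sum_nbij' (i := fun p => (⟨p.2, p.1.erase p.2⟩ : (_ : α) × Finset α))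
    (j := fun p => (⟨insert p.1 p.2, p.1⟩ : (_ : Finset α) × α))
  · intro ⟨T, x⟩ hp
    rw [mem_sigma] at hp ⊢
    obtain ⟨hT, hx⟩ := hp
    obtain ⟨hTS, hTc⟩ := mem_powersetCard.1 hT
    refine ⟨hTS hx, mem_powersetCard.2 ⟨erase_subset_erase _ hTS, ?_⟩⟩
    rw [card_erase_of_mem hx, hTc]
    omega
  · intro ⟨x, T⟩ hp
    rw [mem_sigma] at hp ⊢
    obtain ⟨hx, hT⟩ := hp
    obtain ⟨hTS, hTc⟩ := mem_powersetCard.1 hT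
    have hxT : x ∉ T := fun h => (mem_erase.1 (hTS h)).1 rfl
    refine ⟨mem_powersetCard.2 ⟨?_, ?_⟩, mem_insert_self _ _⟩
    · exact insert_subset hx (hTS.trans (erase_subset _ _))
    · rw [card_insert_of_notMem hxT, hTc]
  · intro ⟨T, x⟩ hp
    rw [mem_sigma] at hp
    simp only [Sigma.mk.inj_iff]
    exact ⟨insert_erase hp.2, HEq.rfl⟩
  · intro ⟨x, T⟩ hp
    rw [mem_sigma] at hp
    obtain ⟨hx, hT⟩ := hp
    have hxT : x ∉ T := fun h => (mem_erase.1 ((mem_powersetCard.1 hT).1 h)).1 rfl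
    simp only [Sigma.mk.inj_iff]
    exact ⟨trivial, heq_of_eq (erase_insert hxT)⟩
  · intro ⟨T, x⟩ hp
    rw [mem_sigma] at hp
    rw [insert_erase hp.2]

lemma key_induction {n : ℕ} (a : Fin n → ℝ) {c : ℝ} (hc : 0 < c)
    (hb : ∀ j, 0 ≤ a j ∧ a j ≤ c) (t : ℝ) :
    ∀ m : ℕ, ∀ S : Finset (Fin n), m ≤ S.card →
    ∑ T ∈ S.powersetCard m,
        Real.exp (t * (∑ j ∈ T, a j - (m : ℝ) * ((∑ j ∈ S, a j) / S.card)))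
      ≤ (S.card.choose m : ℝ) * Real.exp (t ^ 2 * c ^ 2 * m / 8) := by
  intro m
  induction m with
  | zero =>
    intro S _
    simp
  | succ m ih =>
    intro S hmS
    have hN1 : 1 ≤ S.card := le_trans (Nat.succ_le_succ (Nat.zero_le m)) hmS
    set N : ℕ := S.card with hNdef
    set A : ℝ := ∑ j ∈ S, a j with hA
    set μS : ℝ := A / N with hmuS
    set α : ℝ := ((N : ℝ) - ((m : ℝ) + 1)) / ((N : ℝ) - 1) with hα
    have hα0 : 0 ≤ α := by
      rcases Nat.lt_or_ge N 2 with h2 | h2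
      · have hNv : N = 1 := by omega
        have hmv : m = 0 := by omega
        simp [hα, hNv, hmv]
      · apply div_nonneg
        · have : (m : ℝ) + 1 ≤ (N : ℝ) := by exact_mod_cast hmS
          linarith
        · have : (2 : ℝ) ≤ (N : ℝ) := by exact_mod_cast h2
          linarith
    have hα1 : α ≤ 1 := by
      rcases Nat.lt_or_ge N 2 with h2 | h2
      · have hNv : N = 1 := by omega
        have hmv : m = 0 := by omega
        simp [hα, hNv, hmv]
      · rw [hα, div_le_one (by
          have : (2 : ℝ) ≤ (N : ℝ) := by exact_mod_cast h2
          linarith)]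
        linarith [Nat.cast_nonneg (α := ℝ) m]
    have hmain : ((m + 1 : ℕ) : ℝ) *
        (∑ T ∈ S.powersetCard (m + 1),
          Real.exp (t * (∑ j ∈ T, a j - ((m + 1 : ℕ) : ℝ) * μS)))
        ≤ ((m + 1 : ℕ) : ℝ) * ((N.choose (m + 1) : ℝ) *
            Real.exp (t ^ 2 * c ^ 2 * (m + 1) / 8)) := by
      rw [count_ident]
      have hstep : ∀ x ∈ S,
          ∑ T ∈ (S.erase x).powersetCard m,
            Real.exp (t * (∑ j ∈ insert x T, a j - ((m + 1 : ℕ) : ℝ) * μS))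
          ≤ Real.exp ((t * α) * (a x - μS)) *
              (((N - 1).choose m : ℝ) * Real.exp (t ^ 2 * c ^ 2 * m / 8)) := by
        intro x hx
        have hcard : (S.erase x).card = N - 1 := by rw [card_erase_of_mem hx]
        have hsub : ∑ j ∈ S.erase x, a j = A - a x := by
          rw [hA, ← Finset.sum_erase_eq_sub hx]
        have hexp : ∀ T ∈ (S.erase x).powersetCard m,
            t * (∑ j ∈ insert x T, a j - ((m + 1 : ℕ) : ℝ) * μS)
            = (t * α) * (a x - μS)
              + t * (∑ j ∈ T, a j - (m : ℝ) * ((∑ j ∈ S.erase x, a j) / (S.erase x).card)) := by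
          intro T hT
          have hxT : x ∉ T := fun h => (mem_erase.1 ((mem_powersetCard.1 hT).1 h)).1 rfl
          rw [Finset.sum_insert hxT, hsub, hcard]
          rcases Nat.lt_or_ge N 2 with h2 | h2
          · have hNv : N = 1 := by omega
            have hmv : m = 0 := by omega
            have hT0 : T = ∅ := by
              have h := (mem_powersetCard.1 hT).2
              rw [hmv] at h
              exact card_eq_zero.1 h
            have hSx : S = {x} :=
              Finset.eq_singleton_iff_unique_mem.2
                ⟨hx, fun y hy => Finset.card_le_one.1 (by omega) y hy x hx⟩
            have hAx : A = a x := by rw [hA, hSx, sum_singleton]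
            have hμx : μS = a x := by rw [hmuS, hAx, hNv]; norm_num
            have hαz : α = 0 := by rw [hα, hNv]; norm_num
            rw [hT0, sum_empty, hαz, hμx, hmv, hNv, hAx]
            norm_num
          · have hNr : (2 : ℝ) ≤ (N : ℝ) := by exact_mod_cast h2
            have h1 : ((N : ℝ) - 1) ≠ 0 := by linarith
            have h0 : (N : ℝ) ≠ 0 := by linarith
            have hc1 : ((N - 1 : ℕ) : ℝ) = (N : ℝ) - 1 := by
              push_cast [Nat.cast_sub (by omega : 1 ≤ N)]
              ring
            rw [hc1, hα, hmuS]
            push_cast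
            field_simp
            ring
        have hsplit : ∑ T ∈ (S.erase x).powersetCard m,
            Real.exp (t * (∑ j ∈ insert x T, a j - ((m + 1 : ℕ) : ℝ) * μS))
            = Real.exp ((t * α) * (a x - μS)) *
              ∑ T ∈ (S.erase x).powersetCard m,
                Real.exp (t * (∑ j ∈ T, a j
                  - (m : ℝ) * ((∑ j ∈ S.erase x, a j) / (S.erase x).card))) := by
          rw [mul_sum]
          exact sum_congr rfl fun T hT => by rw [hexp T hT, Real.exp_add]
        rw [hsplit]
        apply mul_le_mul_of_nonneg_left _ (Real.exp_pos _).le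
        have h := ih (S.erase x) (by rw [hcard]; omega)
        rw [hcard] at h
        rw [hcard]
        exact h
      calc ∑ x ∈ S, ∑ T ∈ (S.erase x).powersetCard m,
            Real.exp (t * (∑ j ∈ insert x T, a j - ((m + 1 : ℕ) : ℝ) * μS))
          ≤ ∑ x ∈ S, Real.exp ((t * α) * (a x - μS)) *
              (((N - 1).choose m : ℝ) * Real.exp (t ^ 2 * c ^ 2 * m / 8)) :=
            sum_le_sum hstep
        _ = (∑ x ∈ S, Real.exp ((t * α) * (a x - μS))) *
              (((N - 1).choose m : ℝ) * Real.exp (t ^ 2 * c ^ 2 * m / 8)) := by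
            rw [sum_mul]
        _ ≤ ((N : ℝ) * Real.exp ((t * α) ^ 2 * c ^ 2 / 8)) *
              (((N - 1).choose m : ℝ) * Real.exp (t ^ 2 * c ^ 2 * m / 8)) := by
            apply mul_le_mul_of_nonneg_right _ (by positivity)
            exact hoeff_finset S a hc (fun x _ => hb x) (t * α)
        _ ≤ ((N : ℝ) * Real.exp (t ^ 2 * c ^ 2 / 8)) *
              (((N - 1).choose m : ℝ) * Real.exp (t ^ 2 * c ^ 2 * m / 8)) := by
            apply mul_le_mul_of_nonneg_right _ (by positivity)
            apply mul_le_mul_of_nonneg_left _ (Nat.cast_nonneg N)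
            apply Real.exp_le_exp.2
            have hsq : (t * α) ^ 2 ≤ t ^ 2 := by
              nlinarith [sq_nonneg t, mul_le_mul hα1 hα1 hα0 zero_le_one]
            have h3 := mul_le_mul_of_nonneg_right hsq (sq_nonneg c)
            linarith
        _ = ((N : ℝ) * ((N - 1).choose m : ℝ)) *
              Real.exp (t ^ 2 * c ^ 2 * (m + 1) / 8) := by
            rw [mul_mul_mul_comm, ← Real.exp_add]
            congr 1
            ring
        _ = ((m + 1 : ℕ) : ℝ) * ((N.choose (m + 1) : ℝ) *
              Real.exp (t ^ 2 * c ^ 2 * (m + 1) / 8)) := by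
            have hnat : N * (N - 1).choose m = N.choose (m + 1) * (m + 1) := by
              have h := Nat.add_one_mul_choose_eq (N - 1) m
              rwa [Nat.sub_add_cancel hN1] at h
            have hr := congrArg (fun k : ℕ => (k : ℝ)) hnat
            push_cast at hr
            rw [← mul_assoc]
            congr 1
            push_cast
            linarith
    have hpos : (0 : ℝ) < ((m + 1 : ℕ) : ℝ) := by positivity
    have hfinal := le_of_mul_le_mul_left hmain hpos
    calc ∑ T ∈ S.powersetCard (m + 1),
          Real.exp (t * (∑ j ∈ T, a j - ((m + 1 : ℕ) : ℝ) * μS))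
        ≤ (N.choose (m + 1) : ℝ) * Real.exp (t ^ 2 * c ^ 2 * (m + 1) / 8) := hfinal
      _ = (N.choose (m + 1) : ℝ) * Real.exp (t ^ 2 * c ^ 2 * ((m + 1 : ℕ) : ℝ) / 8) := by
          push_cast
          ring_nf

open Classical in
lemma chernoff_tail {n : ℕ} (hn : 2 ≤ n) {c : ℝ} (hc : 0 < c) (a : Fin n → ℝ)
    (hb : ∀ j, 0 ≤ a j ∧ a j ≤ c) (μ : ℝ) (hμ : μ = (∑ j, a j) / n)
    (i : ℕ) (hi1 : 1 ≤ i) (hin : i ≤ n) (s : ℝ) (hs : s = 1 ∨ s = -1) :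
    (((((univ : Finset (Fin n)).powersetCard i).filter fun T =>
        c * Real.sqrt (i * Real.log n) ≤ s * (∑ j ∈ T, a j - μ * i)).card : ℝ)
      ≤ (n.choose i : ℝ) / (n : ℝ) ^ 2) := by
  have hnR : (1 : ℝ) < n := by exact_mod_cast lt_of_lt_of_le one_lt_two hn
  have hlog : 0 < Real.log n := Real.log_pos hnR
  have hi0 : (0 : ℝ) < i := by exact_mod_cast hi1
  set tgt : ℝ := c * Real.sqrt (i * Real.log n) with htgt
  have hX : (0 : ℝ) ≤ (i : ℝ) * Real.log n := by positivity
  have htgt2 : tgt ^ 2 = c ^ 2 * ((i : ℝ) * Real.log n) := by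
    rw [htgt, mul_pow, Real.sq_sqrt hX]
  have htgtpos : 0 < tgt := by
    rw [htgt]
    exact mul_pos hc (Real.sqrt_pos.2 (by positivity))
  set lam : ℝ := 4 * tgt / ((i : ℝ) * c ^ 2) with hlam
  have hlampos : 0 < lam := by
    rw [hlam]; positivity
  set t : ℝ := s * lam with ht
  have hs2 : s ^ 2 = 1 := by rcases hs with rfl | rfl <;> norm_num
  have ht2 : t ^ 2 = lam ^ 2 := by rw [ht, mul_pow, hs2, one_mul]
  have hE : t ^ 2 * c ^ 2 * (i : ℝ) / 8 - lam * tgt = -(2 * Real.log n) := by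
    rw [ht2, hlam]
    have hi' : (i : ℝ) ≠ 0 := hi0.ne'
    have hc' : (c : ℝ) ≠ 0 := hc.ne'
    field_simp
    linear_combination (-16 * c ^ 2) * Real.sq_sqrt hX
  have hsum := key_induction a hc hb t i univ (by simpa using hin)
  rw [card_univ, Fintype.card_fin] at hsum
  have hμ' : (∑ j ∈ univ, a j) / (n : ℝ) = μ := by rw [hμ]
  rw [hμ'] at hsum
  set P := ((univ : Finset (Fin n)).powersetCard i).filter fun T =>
      tgt ≤ s * (∑ j ∈ T, a j - μ * i) with hP
  have hlb : (P.card : ℝ) * Real.exp (lam * tgt)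
      ≤ ∑ T ∈ (univ : Finset (Fin n)).powersetCard i,
          Real.exp (t * (∑ j ∈ T, a j - (i : ℝ) * μ)) := by
    calc (P.card : ℝ) * Real.exp (lam * tgt)
        = ∑ _T ∈ P, Real.exp (lam * tgt) := by rw [sum_const, nsmul_eq_mul]
      _ ≤ ∑ T ∈ P, Real.exp (t * (∑ j ∈ T, a j - (i : ℝ) * μ)) := by
          apply sum_le_sum
          intro T hT
          apply Real.exp_le_exp.2
          have hT' := (mem_filter.1 hT).2
          have heq : t * (∑ j ∈ T, a j - (i : ℝ) * μ)
              = lam * (s * (∑ j ∈ T, a j - μ * i)) := by rw [ht]; ring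
          rw [heq]
          exact mul_le_mul_of_nonneg_left hT' hlampos.le
      _ ≤ ∑ T ∈ (univ : Finset (Fin n)).powersetCard i,
            Real.exp (t * (∑ j ∈ T, a j - (i : ℝ) * μ)) := by
          apply sum_le_sum_of_subset_of_nonneg (filter_subset _ _)
          intro T _ _
          exact (Real.exp_pos _).le
  have hcard : (P.card : ℝ) * Real.exp (lam * tgt)
      ≤ (n.choose i : ℝ) * Real.exp (t ^ 2 * c ^ 2 * (i : ℝ) / 8) := hlb.trans hsum
  have h2 : (P.card : ℝ)
      ≤ ((n.choose i : ℝ) * Real.exp (t ^ 2 * c ^ 2 * (i : ℝ) / 8)) /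
          Real.exp (lam * tgt) := (le_div_iff₀ (Real.exp_pos _)).2 hcard
  rw [mul_div_assoc, ← Real.exp_sub, hE] at h2
  have hexp2 : Real.exp (-(2 * Real.log n)) = ((n : ℝ) ^ 2)⁻¹ := by
    rw [Real.exp_neg, two_mul, Real.exp_add, Real.exp_log (by positivity : (0:ℝ) < (n:ℝ)), sq]
  rw [hexp2] at h2
  rw [div_eq_mul_inv]
  exact h2

lemma card_filter_coe_lt {n i : ℕ} (hin : i ≤ n) :
    ((univ : Finset (Fin n)).filter fun j : Fin n => (j : ℕ) < i).card = i := by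
  have key : ((univ : Finset (Fin n)).filter fun j : Fin n => (j : ℕ) < i).card
      = (Finset.range i).card := by
    apply Finset.card_bij (fun (j : Fin n) _ => (j : ℕ))
    · intro j hj
      exact Finset.mem_range.2 (mem_filter.1 hj).2
    · intro j₁ h₁ j₂ h₂ h
      exact Fin.ext h
    · intro b hb
      have hbn : b < n := lt_of_lt_of_le (Finset.mem_range.1 hb) hin
      exact ⟨⟨b, hbn⟩, mem_filter.2 ⟨mem_univ _, Finset.mem_range.1 hb⟩, rfl⟩
  rw [key, Finset.card_range]

open Classical in

open Classical in
lemma fiber_le {n : ℕ} (I T : Finset (Fin n)) (h : I.card = T.card) :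
    ((univ : Finset (Equiv.Perm (Fin n))).filter
      fun σ : Equiv.Perm (Fin n) => I.image σ = T).card
      ≤ I.card.factorial * (n - I.card).factorial := by
  rw [← Fintype.card_subtype]
  have hmem : ∀ (σ : {σ : Equiv.Perm (Fin n) // I.image σ = T}) (x : Fin n),
      x ∈ I → (σ : Equiv.Perm (Fin n)) x ∈ T := by
    intro σ x hx
    have hh := mem_image_of_mem (⇑(σ : Equiv.Perm (Fin n))) hx
    rwa [σ.2] at hh
  have hmemc : ∀ (σ : {σ : Equiv.Perm (Fin n) // I.image σ = T}) (x : Fin n),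
      x ∈ Iᶜ → (σ : Equiv.Perm (Fin n)) x ∈ Tᶜ := by
    intro σ x hx
    rw [Finset.mem_compl] at hx ⊢
    intro hT
    have hT' : (σ : Equiv.Perm (Fin n)) x ∈ I.image ⇑(σ : Equiv.Perm (Fin n)) := by
      rw [σ.2]; exact hT
    obtain ⟨y, hy, hxy⟩ := Finset.mem_image.1 hT'
    exact hx ((σ : Equiv.Perm (Fin n)).injective hxy ▸ hy)
  -- injection into pairs of functions between subtypes
  let Φ : {σ : Equiv.Perm (Fin n) // I.image σ = T} →
      ((I : Set (Fin n)) ≃ (T : Set (Fin n))) × ((Iᶜ : Finset (Fin n)) ≃ (Tᶜ : Finset (Fin n))) :=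
    fun σ =>
      (Equiv.ofBijective (fun x => ⟨(σ : Equiv.Perm (Fin n)) x, hmem σ x x.2⟩)
        ((Fintype.bijective_iff_injective_and_card _).2
          ⟨fun x y hxy => Subtype.ext ((σ : Equiv.Perm (Fin n)).injective
              (congrArg Subtype.val hxy)),
            by simp [Fintype.card_coe, h]⟩),
       Equiv.ofBijective (fun x => ⟨(σ : Equiv.Perm (Fin n)) x, hmemc σ x x.2⟩)
        ((Fintype.bijective_iff_injective_and_card _).2
          ⟨fun x y hxy => Subtype.ext ((σ : Equiv.Perm (Fin n)).injective
              (congrArg Subtype.val hxy)),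
            by simp [Fintype.card_coe, Finset.card_compl, h]⟩))
  have hΦ : Function.Injective Φ := by
    intro σ₁ σ₂ hΦeq
    apply Subtype.ext
    apply Equiv.ext
    intro x
    by_cases hx : x ∈ I
    · have := congrArg (fun e => (e.1 ⟨x, hx⟩ : Fin n)) hΦeq
      simpa [Φ] using this
    · have hx' : x ∈ Iᶜ := Finset.mem_compl.2 hx
      have := congrArg (fun e => (e.2 ⟨x, hx'⟩ : Fin n)) hΦeq
      simpa [Φ] using this
  calc Fintype.card {σ : Equiv.Perm (Fin n) // I.image σ = T}
      ≤ Fintype.card (((I : Set (Fin n)) ≃ (T : Set (Fin n))) ×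
          ((Iᶜ : Finset (Fin n)) ≃ (Tᶜ : Finset (Fin n)))) := Fintype.card_le_of_injective Φ hΦ
    _ = I.card.factorial * (n - I.card).factorial := by
        rw [Fintype.card_prod]
        congr 1
        · rw [Fintype.card_equiv (Fintype.equivOfCardEq (by simp [Fintype.card_coe, h]))]
          simp [Fintype.card_coe]
        · rw [Fintype.card_equiv (Fintype.equivOfCardEq
            (by simp [Fintype.card_coe, Finset.card_compl, h]))]
          simp [Fintype.card_coe, Finset.card_compl, h]

open Classical in
lemma perm_count {n : ℕ} (I : Finset (Fin n)) (p : Finset (Fin n) → Prop) :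
    ((univ : Finset (Equiv.Perm (Fin n))).filter fun σ : Equiv.Perm (Fin n) => p (I.image ⇑σ)).card
      ≤ I.card.factorial * (n - I.card).factorial *
        (((univ : Finset (Fin n)).powersetCard I.card).filter p).card := by
  classical
  set s := (univ : Finset (Equiv.Perm (Fin n))).filter (fun σ : Equiv.Perm (Fin n) => p (I.image ⇑σ)) with hs
  set t := ((univ : Finset (Fin n)).powersetCard I.card).filter p with htdef
  have hmap : ∀ σ ∈ s, I.image ⇑σ ∈ t := by
    intro σ hσ
    rw [hs, mem_filter] at hσ
    rw [htdef, mem_filter]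
    exact ⟨mem_powersetCard.2 ⟨subset_univ _, card_image_of_injective I σ.injective⟩, hσ.2⟩
  rw [Finset.card_eq_sum_card_fiberwise hmap]
  calc ∑ T ∈ t, (s.filter fun σ : Equiv.Perm (Fin n) => I.image ⇑σ = T).card
      ≤ ∑ _T ∈ t, I.card.factorial * (n - I.card).factorial := by
        apply sum_le_sum
        intro T hT
        have hcard : I.card = T.card := ((mem_powersetCard.1 (mem_filter.1 hT).1).2).symm
        calc (s.filter fun σ : Equiv.Perm (Fin n) => I.image ⇑σ = T).card
            ≤ ((univ : Finset _).filter fun σ : Equiv.Perm (Fin n) => I.image σ = T).card := by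
              apply card_le_card
              intro σ hσ
              rw [mem_filter] at hσ ⊢
              exact ⟨mem_univ _, hσ.2⟩
          _ ≤ _ := fiber_le I T hcard
      _ = t.card * (I.card.factorial * (n - I.card).factorial) := by
          rw [sum_const, smul_eq_mul]
      _ = I.card.factorial * (n - I.card).factorial * t.card := by ring

open Finset Classical in
/-- Let `n ≥ 2`, `c > 0`, and `a 1, …, a n ∈ [0, c]` with mean `μ`.  If `σ` is
a uniformly random permutation of `{1, …, n}`, then with probability at least
`1 − 2/n` every prefix sum satisfies
`|∑_{j=1}^i a (σ j) − μ i| < c √(i ln n)` simultaneously for all `1 ≤ i ≤ n`.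
The probability is a counting quotient over all `n!` permutations. -/
theorem prefix_concentration_random_permutation
    (n : ℕ) (hn : 2 ≤ n) (c : ℝ) (hc : 0 < c) (a : Fin n → ℝ)
    (hbound : ∀ j, 0 ≤ a j ∧ a j ≤ c)
    (μ : ℝ) (hμ : μ = (∑ j, a j) / n) :
    ((univ.filter (fun σ : Equiv.Perm (Fin n) =>
        ∃ i : ℕ, 1 ≤ i ∧ i ≤ n ∧
          c * Real.sqrt (i * Real.log n) ≤
            |(∑ j ∈ univ.filter (fun j : Fin n => (j : ℕ) < i), a (σ j))
              - μ * i|)).card : ℝ)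
      / (Fintype.card (Equiv.Perm (Fin n)) : ℝ) ≤ 2 / n := by
  have hn0 : (0 : ℝ) < n := by exact_mod_cast Nat.lt_of_lt_of_le Nat.zero_lt_two hn
  have hfact : (0 : ℝ) < (n.factorial : ℝ) := by exact_mod_cast n.factorial_pos
  -- Step 1: union bound over i
  have hsub : (univ.filter (fun σ : Equiv.Perm (Fin n) =>
        ∃ i : ℕ, 1 ≤ i ∧ i ≤ n ∧
          c * Real.sqrt (i * Real.log n) ≤
            |(∑ j ∈ univ.filter (fun j : Fin n => (j : ℕ) < i), a (σ j)) - μ * i|))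
      ⊆ (Finset.Icc 1 n).biUnion (fun i =>
          univ.filter (fun σ : Equiv.Perm (Fin n) =>
            c * Real.sqrt (i * Real.log n) ≤
              |(∑ j ∈ univ.filter (fun j : Fin n => (j : ℕ) < i), a (σ j)) - μ * i|)) := by
    intro σ hσ
    obtain ⟨_, i, hi1, hin, hb⟩ := mem_filter.1 hσ
    exact mem_biUnion.2 ⟨i, Finset.mem_Icc.2 ⟨hi1, hin⟩, mem_filter.2 ⟨mem_univ _, hb⟩⟩
  -- Step 2: per-index bound
  have hper : ∀ i ∈ Finset.Icc 1 n,
      ((univ.filter (fun σ : Equiv.Perm (Fin n) =>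
          c * Real.sqrt (i * Real.log n) ≤
            |(∑ j ∈ univ.filter (fun j : Fin n => (j : ℕ) < i), a (σ j)) - μ * i|)).card : ℝ)
        ≤ 2 * (n.factorial : ℝ) / (n : ℝ) ^ 2 := by
    intro i hi
    obtain ⟨hi1, hin⟩ := Finset.mem_Icc.1 hi
    set I : Finset (Fin n) := univ.filter (fun j : Fin n => (j : ℕ) < i) with hIdef
    have hIcard : I.card = i := card_filter_coe_lt hin
    -- per-sign bound
    have hsign : ∀ s : ℝ, s = 1 ∨ s = -1 →
        ((univ.filter (fun σ : Equiv.Perm (Fin n) =>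
            c * Real.sqrt (i * Real.log n) ≤
              s * ((∑ j ∈ I, a (σ j)) - μ * i))).card : ℝ)
          ≤ (n.factorial : ℝ) / (n : ℝ) ^ 2 := by
      intro s hs
      set p : Finset (Fin n) → Prop := fun T =>
        c * Real.sqrt (i * Real.log n) ≤ s * ((∑ j ∈ T, a j) - μ * i) with hp
      have hfe : (univ.filter (fun σ : Equiv.Perm (Fin n) =>
            c * Real.sqrt (i * Real.log n) ≤ s * ((∑ j ∈ I, a (σ j)) - μ * i)))
          = (univ.filter (fun σ : Equiv.Perm (Fin n) => p (I.image ⇑σ))) := by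
        apply filter_congr
        intro σ _
        have hrw : (∑ j ∈ I.image ⇑σ, a j) = ∑ j ∈ I, a (σ j) :=
          Finset.sum_image (fun x _ y _ h => σ.injective h)
        rw [hp]
        simp only [hrw]
      have h1 := perm_count I p
      rw [hIcard] at h1
      have h2 := chernoff_tail hn hc a hbound μ hμ i hi1 hin s hs
      have h3 : ((((univ : Finset (Fin n)).powersetCard i).filter p).card : ℝ)
          ≤ (n.choose i : ℝ) / (n : ℝ) ^ 2 := h2
      have h4 : ((univ.filter (fun σ : Equiv.Perm (Fin n) => p (I.image ⇑σ))).card : ℝ)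
          ≤ (i.factorial * (n - i).factorial : ℕ) *
            ((((univ : Finset (Fin n)).powersetCard i).filter p).card : ℝ) := by
        exact_mod_cast Nat.cast_le.2 h1
      have hfactpos : (0 : ℝ) ≤ ((i.factorial * (n - i).factorial : ℕ) : ℝ) :=
        Nat.cast_nonneg _
      calc ((univ.filter (fun σ : Equiv.Perm (Fin n) =>
            c * Real.sqrt (i * Real.log n) ≤
              s * ((∑ j ∈ I, a (σ j)) - μ * i))).card : ℝ)
          = ((univ.filter (fun σ : Equiv.Perm (Fin n) => p (I.image ⇑σ))).card : ℝ) := by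
            rw [hfe]
        _ ≤ ((i.factorial * (n - i).factorial : ℕ) : ℝ) *
              ((((univ : Finset (Fin n)).powersetCard i).filter p).card : ℝ) := h4
        _ ≤ ((i.factorial * (n - i).factorial : ℕ) : ℝ) *
              ((n.choose i : ℝ) / (n : ℝ) ^ 2) :=
            mul_le_mul_of_nonneg_left h3 hfactpos
        _ = (n.factorial : ℝ) / (n : ℝ) ^ 2 := by
            have hnat : n.choose i * i.factorial * (n - i).factorial = n.factorial :=
              Nat.choose_mul_factorial_mul_factorial hin
            have hr := congrArg (fun k : ℕ => (k : ℝ)) hnat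
            push_cast at hr ⊢
            rw [← hr]
            ring
    -- split the two tails
    have habs : (univ.filter (fun σ : Equiv.Perm (Fin n) =>
          c * Real.sqrt (i * Real.log n) ≤ |(∑ j ∈ I, a (σ j)) - μ * i|))
        ⊆ (univ.filter (fun σ : Equiv.Perm (Fin n) =>
            c * Real.sqrt (i * Real.log n) ≤ (1 : ℝ) * ((∑ j ∈ I, a (σ j)) - μ * i)))
          ∪ (univ.filter (fun σ : Equiv.Perm (Fin n) =>
            c * Real.sqrt (i * Real.log n) ≤ (-1 : ℝ) * ((∑ j ∈ I, a (σ j)) - μ * i))) := by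
      intro σ hσ
      obtain ⟨_, hb⟩ := mem_filter.1 hσ
      rcases le_abs.1 hb with h | h
      · exact Finset.mem_union_left _ (mem_filter.2 ⟨mem_univ _, by linarith⟩)
      · exact Finset.mem_union_right _ (mem_filter.2 ⟨mem_univ _, by linarith⟩)
    calc ((univ.filter (fun σ : Equiv.Perm (Fin n) =>
          c * Real.sqrt (i * Real.log n) ≤ |(∑ j ∈ I, a (σ j)) - μ * i|)).card : ℝ)
        ≤ (((univ.filter (fun σ : Equiv.Perm (Fin n) =>
            c * Real.sqrt (i * Real.log n) ≤ (1 : ℝ) * ((∑ j ∈ I, a (σ j)) - μ * i)))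
          ∪ (univ.filter (fun σ : Equiv.Perm (Fin n) =>
            c * Real.sqrt (i * Real.log n) ≤ (-1 : ℝ) * ((∑ j ∈ I, a (σ j)) - μ * i)))).card : ℝ) := by
          exact_mod_cast Nat.cast_le.2 (card_le_card habs)
      _ ≤ ((univ.filter (fun σ : Equiv.Perm (Fin n) =>
            c * Real.sqrt (i * Real.log n) ≤ (1 : ℝ) * ((∑ j ∈ I, a (σ j)) - μ * i))).card : ℝ)
          + ((univ.filter (fun σ : Equiv.Perm (Fin n) =>
            c * Real.sqrt (i * Real.log n) ≤ (-1 : ℝ) * ((∑ j ∈ I, a (σ j)) - μ * i))).card : ℝ) := by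
          exact_mod_cast Nat.cast_le.2 (card_union_le _ _)
      _ ≤ (n.factorial : ℝ) / (n : ℝ) ^ 2 + (n.factorial : ℝ) / (n : ℝ) ^ 2 :=
          add_le_add (hsign 1 (Or.inl rfl)) (hsign (-1) (Or.inr rfl))
      _ = 2 * (n.factorial : ℝ) / (n : ℝ) ^ 2 := by ring
  -- Step 3: combine
  have htotal : ((univ.filter (fun σ : Equiv.Perm (Fin n) =>
        ∃ i : ℕ, 1 ≤ i ∧ i ≤ n ∧
          c * Real.sqrt (i * Real.log n) ≤
            |(∑ j ∈ univ.filter (fun j : Fin n => (j : ℕ) < i), a (σ j)) - μ * i|)).card : ℝ)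
      ≤ 2 * (n.factorial : ℝ) / (n : ℝ) := by
    have hc1 : ((univ.filter (fun σ : Equiv.Perm (Fin n) =>
        ∃ i : ℕ, 1 ≤ i ∧ i ≤ n ∧
          c * Real.sqrt (i * Real.log n) ≤
            |(∑ j ∈ univ.filter (fun j : Fin n => (j : ℕ) < i), a (σ j)) - μ * i|)).card : ℝ)
        ≤ ∑ i ∈ Finset.Icc 1 n,
            ((univ.filter (fun σ : Equiv.Perm (Fin n) =>
              c * Real.sqrt (i * Real.log n) ≤
                |(∑ j ∈ univ.filter (fun j : Fin n => (j : ℕ) < i), a (σ j)) - μ * i|)).card : ℝ) := by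
      have := (card_le_card hsub).trans (Finset.card_biUnion_le)
      calc _ ≤ (((Finset.Icc 1 n).biUnion (fun i =>
          univ.filter (fun σ : Equiv.Perm (Fin n) =>
            c * Real.sqrt (i * Real.log n) ≤
              |(∑ j ∈ univ.filter (fun j : Fin n => (j : ℕ) < i), a (σ j)) - μ * i|))).card : ℝ) := by
            exact_mod_cast Nat.cast_le.2 (card_le_card hsub)
        _ ≤ _ := by
            exact_mod_cast Nat.cast_le.2 Finset.card_biUnion_le
    calc _ ≤ ∑ i ∈ Finset.Icc 1 n,
            ((univ.filter (fun σ : Equiv.Perm (Fin n) =>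
              c * Real.sqrt (i * Real.log n) ≤
                |(∑ j ∈ univ.filter (fun j : Fin n => (j : ℕ) < i), a (σ j)) - μ * i|)).card : ℝ) := hc1
      _ ≤ ∑ _i ∈ Finset.Icc 1 n, 2 * (n.factorial : ℝ) / (n : ℝ) ^ 2 := sum_le_sum hper
      _ = (n : ℝ) * (2 * (n.factorial : ℝ) / (n : ℝ) ^ 2) := by
          rw [sum_const, Nat.card_Icc, nsmul_eq_mul]
          norm_num
      _ = 2 * (n.factorial : ℝ) / (n : ℝ) := by
          field_simp
  rw [Fintype.card_perm, Fintype.card_fin]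
  rw [div_le_div_iff₀ hfact hn0]
  have := (le_div_iff₀ hn0).1 (htotal.trans_eq (by ring : 2 * (n.factorial:ℝ)/(n:ℝ) = (2 * (n.factorial:ℝ))/(n:ℝ)))
  linarith
end

section
/- Consider a 0-1 knapsack instance with items sorted by non-increasing efficiency and with Σ_{i=1}^n w_i > W, and let Ĩ = {1, ..., k} be the greedy prefix solution. Then there exists an optimal solution S* ⊆ {1, ..., n} such that the symmetric difference Ĩ Δ S* has cardinality at most 2·w_max. -/
/-!
Among the optimal solutions pick `S` as close as possible to the greedy prefix `I`. Items of
`I \ S` are at least as efficient as the break item `k`, items of `S \ I` at most as efficient,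
so exchanging `A ⊆ I \ S` for `B ⊆ S \ I` with `w(B) ≤ w(A)` loses no profit; by the choice of
`S` such an exchange is infeasible unless `A = B = ∅`. Hence no nonempty subsets of `I \ S` and
`S \ I` have equal weight, and the weights of `I \ S` and `S \ I` differ by less than `w_max`.
A pigeonhole argument on the gaps between the prefix sums of the two sets then shows that each
of them has fewer than `w_max` elements.
-/

open Finset

namespace List

theorem length_lt_of_prefix_sums_ne {as bs : List ℕ} {m : ℕ} (hb : ∀ x ∈ bs, x ≤ m)
    (hsum : as.sum < bs.sum + m)
    (h : ∀ i i' j j', i < i' → i' ≤ as.length → j ≤ j' → j' ≤ bs.length →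
      (as.take i).sum + (bs.take j').sum ≠ (as.take i').sum + (bs.take j).sum) :
    as.length < m := by
  set f : ℕ → ℕ := fun i => (as.take i).sum
  set g : ℕ → ℕ := fun j => (bs.take j).sum
  -- `J i` indexes the longest prefix of `bs` whose sum is at most `f i`; the gaps
  -- `f i - g (J i)`, `i ≤ as.length`, lie in `[0, m)` and are pairwise distinct.
  set J : ℕ → ℕ := fun i => Nat.findGreatest (fun j => g j ≤ f i) bs.length
  have hJ (i : ℕ) : g (J i) ≤ f i :=
    Nat.findGreatest_spec (P := fun j => g j ≤ f i) (Nat.zero_le _) (by simp [g])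
  have hJ_le (i : ℕ) : J i ≤ bs.length := Nat.findGreatest_le _
  have hJ_mono {i i' : ℕ} (hii : i ≤ i') : J i ≤ J i' :=
    Nat.le_findGreatest (hJ_le i) <|
      (hJ i).trans <| (take_sublist_take_left hii).sum_le_sum fun _ _ => Nat.zero_le _
  have hgap (i : ℕ) : f i < g (J i) + m := by
    rcases (hJ_le i).lt_or_eq with hlt | heq
    · have hnext : ¬ g (J i + 1) ≤ f i :=
        Nat.findGreatest_is_greatest (P := fun j => g j ≤ f i) (Nat.lt_succ_self _) hlt
      have hsucc : g (J i + 1) = g (J i) + bs[J i] := sum_take_succ bs (J i) hlt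
      have := hb _ (getElem_mem hlt)
      omega
    · have : f i ≤ as.sum := (take_sublist i as).sum_le_sum fun _ _ => Nat.zero_le _
      simp only [g, heq, take_length]
      omega
  have hinj : Set.InjOn (fun i => f i - g (J i)) (Finset.range (as.length + 1)) := by
    suffices ∀ i i', i < i' → i' ≤ as.length → f i - g (J i) ≠ f i' - g (J i') by
      intro i hi i' hi' he
      simp only [coe_range, Set.mem_Iio] at hi hi'
      rcases lt_trichotomy i i' with hii | hii | hii
      · exact absurd he (this i i' hii (by omega))
      · exact hii
      · exact absurd he.symm (this i' i hii (by omega))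
    intro i i' hii hi' he
    have := hJ i
    have := hJ i'
    exact h i i' (J i) (J i') hii hi' (hJ_mono hii.le) (hJ_le i')
      (show f i + g (J i') = f i' + g (J i) by omega)
  have hmaps :
      Set.MapsTo (fun i => f i - g (J i)) (Finset.range (as.length + 1)) (Finset.range m) :=
    fun i _ => Finset.mem_range.2 (Nat.sub_lt_left_of_lt_add (hJ i) (hgap i))
  simpa using card_le_card_of_injOn _ hmaps hinj

theorem exists_subset_sum_take_add {α : Type*} [DecidableEq α] {l : List α} (hl : l.Nodup)
    (w : α → ℕ) {i i' : ℕ} (hii : i ≤ i') (hi' : i' ≤ l.length) :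
    ∃ s ⊆ l.toFinset, #s = i' - i ∧
      ((l.map w).take i).sum + ∑ x ∈ s, w x = ((l.map w).take i').sum := by
  set block := (l.drop i).take (i' - i)
  have hblock : block.Sublist l := (take_sublist _ _).trans (drop_sublist _ _)
  have hnodup : block.Nodup := hblock.nodup hl
  refine ⟨block.toFinset, fun x hx => mem_toFinset.2 (hblock.subset (mem_toFinset.1 hx)), ?_, ?_⟩
  · rw [toFinset_card_of_nodup hnodup, length_take, length_drop]
    omega
  · rw [sum_toFinset w hnodup, ← map_take, ← map_take, ← sum_append, ← map_append, ← take_add,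
      Nat.add_sub_cancel' hii]

end List

theorem Nat.cross_mul_le_trans {a b c x y z : ℕ} (hy : 0 < y) (h₁ : b * x ≤ a * y)
    (h₂ : c * y ≤ b * z) : c * x ≤ a * z := by
  refine Nat.le_of_mul_le_mul_right ?_ hy
  calc c * x * y = c * y * x := by ring
    _ ≤ b * z * x := Nat.mul_le_mul_right _ h₂
    _ = b * x * z := by ring
    _ ≤ a * y * z := Nat.mul_le_mul_right _ h₁
    _ = a * z * y := by ring

theorem Finset.sum_le_sum_of_cross_mul_le {α : Type*} {s t : Finset α} {p w : α → ℕ} {p₀ w₀ : ℕ}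
    (hw₀ : 0 < w₀) (hs : ∀ b ∈ s, p b * w₀ ≤ p₀ * w b) (ht : ∀ a ∈ t, p₀ * w a ≤ p a * w₀)
    (hst : ∑ b ∈ s, w b ≤ ∑ a ∈ t, w a) : ∑ b ∈ s, p b ≤ ∑ a ∈ t, p a := by
  refine Nat.le_of_mul_le_mul_right ?_ hw₀
  calc (∑ b ∈ s, p b) * w₀ ≤ p₀ * ∑ b ∈ s, w b := by
        rw [sum_mul, mul_sum]; exact sum_le_sum hs
    _ ≤ p₀ * ∑ a ∈ t, w a := Nat.mul_le_mul_left _ hst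
    _ ≤ (∑ a ∈ t, p a) * w₀ := by
        rw [sum_mul, mul_sum]; exact sum_le_sum ht

namespace Finset

variable {α : Type*} [DecidableEq α]

theorem card_lt_of_subset_sums_ne {A B : Finset α} {w : α → ℕ} {m : ℕ} (hB : ∀ b ∈ B, w b ≤ m)
    (hsum : ∑ a ∈ A, w a < ∑ b ∈ B, w b + m)
    (h : ∀ A' ⊆ A, ∀ B' ⊆ B, ∑ a ∈ A', w a = ∑ b ∈ B', w b → A' = ∅) : #A < m := by
  have hlen : (A.toList.map w).length < m := by
    refine List.length_lt_of_prefix_sums_ne (bs := B.toList.map w) ?_ ?_ ?_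
    · simpa using hB
    · simpa only [sum_map_toList] using hsum
    intro i i' j j' hii hi' hjj hj' heq
    simp only [List.length_map, length_toList] at hi' hj'
    obtain ⟨A', hA', hA'card, hA'sum⟩ :=
      List.exists_subset_sum_take_add A.nodup_toList w hii.le (by simpa using hi')
    obtain ⟨B', hB', -, hB'sum⟩ :=
      List.exists_subset_sum_take_add B.nodup_toList w hjj (by simpa using hj')
    rw [toList_toFinset] at hA' hB'
    have := h A' hA' B' hB' (by omega)
    rw [this, card_empty] at hA'card
    omega
  simpa using hlen

theorem symmDiff_sdiff_union {I S A B : Finset α} (hA : A ⊆ I \ S) (hB : B ⊆ S \ I) :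
    symmDiff I ((S \ B) ∪ A) = symmDiff I S \ (A ∪ B) := by
  ext x
  have := @hA x
  have := @hB x
  simp only [mem_symmDiff, mem_sdiff, mem_union] at *
  tauto

theorem sum_sdiff_union_add {M : Type*} [AddCommMonoid M] {S A B : Finset α} (f : α → M)
    (hB : B ⊆ S) (hA : Disjoint S A) :
    ∑ x ∈ (S \ B) ∪ A, f x + ∑ x ∈ B, f x = ∑ x ∈ S, f x + ∑ x ∈ A, f x := by
  rw [sum_union (disjoint_of_subset_left sdiff_subset hA), add_right_comm, sum_sdiff hB]

theorem card_symmDiff (s t : Finset α) : #(symmDiff s t) = #(s \ t) + #(t \ s) := by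
  rw [symmDiff_def, sup_eq_union, card_union_of_disjoint disjoint_sdiff_sdiff]

end Finset

namespace Knapsack

theorem exists_optimal_min_card_symmDiff {α : Type*} [DecidableEq α] [Fintype α]
    (w p : α → ℕ) (W : ℕ) (I : Finset α) :
    ∃ S : Finset α, ∑ i ∈ S, w i ≤ W ∧
      (∀ T : Finset α, ∑ i ∈ T, w i ≤ W → ∑ i ∈ T, p i ≤ ∑ i ∈ S, p i) ∧
      ∀ T : Finset α, ∑ i ∈ T, w i ≤ W → ∑ i ∈ S, p i ≤ ∑ i ∈ T, p i →
        #(symmDiff I S) ≤ #(symmDiff I T) := by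
  set feasible := (univ : Finset (Finset α)).filter fun S => ∑ i ∈ S, w i ≤ W
  obtain ⟨S₀, hS₀, hS₀max⟩ :=
    feasible.exists_max_image (fun S => ∑ i ∈ S, p i) ⟨∅, by simp [feasible]⟩
  set optimal := feasible.filter fun S => ∑ i ∈ S₀, p i ≤ ∑ i ∈ S, p i
  obtain ⟨S, hS, hSmin⟩ := optimal.exists_min_image (fun S => #(symmDiff I S))
    ⟨S₀, mem_filter.2 ⟨hS₀, le_rfl⟩⟩
  simp only [optimal, feasible, mem_filter, mem_univ, true_and] at hS hS₀max hSmin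
  exact ⟨S, hS.1, fun T hT => (hS₀max T hT).trans hS.2,
    fun T hT hST => hSmin T ⟨hT, hS.2.trans hST⟩⟩

variable {α : Type*} [DecidableEq α] {w p : α → ℕ} {W : ℕ}

theorem eq_empty_of_exchange {I S A B : Finset α}
    (hmin : ∀ T : Finset α, ∑ i ∈ T, w i ≤ W → ∑ i ∈ S, p i ≤ ∑ i ∈ T, p i →
        #(symmDiff I S) ≤ #(symmDiff I T))
    {p₀ w₀ : ℕ} (hw₀ : 0 < w₀) (hIS : ∀ a ∈ I \ S, p₀ * w a ≤ p a * w₀)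
    (hSI : ∀ b ∈ S \ I, p b * w₀ ≤ p₀ * w b) (hA : A ⊆ I \ S) (hB : B ⊆ S \ I)
    (hAB : ∑ b ∈ B, w b ≤ ∑ a ∈ A, w a) (hW : ∑ i ∈ S, w i + ∑ a ∈ A, w a ≤ W + ∑ b ∈ B, w b) :
    A = ∅ ∧ B = ∅ := by
  have hBS : B ⊆ S := hB.trans sdiff_subset
  have hSA : Disjoint S A := disjoint_of_subset_right hA disjoint_sdiff
  have hT_w := sum_sdiff_union_add w hBS hSA
  have hT_p := sum_sdiff_union_add p hBS hSA
  have hp := sum_le_sum_of_cross_mul_le hw₀ (fun b hb => hSI b (hB hb))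
    (fun a ha => hIS a (hA ha)) hAB
  have hcard := hmin ((S \ B) ∪ A) (by omega) (by omega)
  have hAB_sub : A ∪ B ⊆ symmDiff I S := by
    rw [symmDiff_def]; exact union_subset_union hA hB
  rw [symmDiff_sdiff_union hA hB, card_sdiff_of_subset hAB_sub] at hcard
  have : #(A ∪ B) = 0 := by have := card_le_card hAB_sub; omega
  simpa using this

theorem card_symmDiff_lt_of_no_exchange {I S : Finset α} {m : ℕ}
    (hex : ∀ A ⊆ I \ S, ∀ B ⊆ S \ I, ∑ b ∈ B, w b ≤ ∑ a ∈ A, w a →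
      ∑ i ∈ S, w i + ∑ a ∈ A, w a ≤ W + ∑ b ∈ B, w b → A = ∅ ∧ B = ∅)
    (hS : ∑ i ∈ S, w i ≤ W) (hI : ∑ i ∈ I, w i ≤ W) (hIm : W < ∑ i ∈ I, w i + m)
    (hm : ∀ i, w i ≤ m) : #(symmDiff I S) < 2 * m := by
  have hI_split := sum_inter_add_sum_sdiff I S w
  have hS_split := sum_inter_add_sum_sdiff S I w
  rw [inter_comm] at hS_split
  have hA : ∑ a ∈ I \ S, w a < ∑ b ∈ S \ I, w b + m := by
    rcases (I \ S).eq_empty_or_nonempty with hempty | ⟨a, ha⟩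
    · rw [hempty, sum_empty]; omega
    · have hfull : W < ∑ i ∈ S, w i + w a := by
        by_contra! hroom
        have := hex {a} (singleton_subset_iff.2 ha) ∅ (empty_subset _) (by simp)
          (by simpa using hroom)
        simp at this
      have := hm a
      omega
  have hB : ∑ b ∈ S \ I, w b < ∑ a ∈ I \ S, w a + m := by omega
  have hAB := card_lt_of_subset_sums_ne (fun b _ => hm b) hA
    fun A hA B hB hAB => (hex A hA B hB hAB.ge (by omega)).1
  have hBA := card_lt_of_subset_sums_ne (fun a _ => hm a) hB
    fun B hB A hA hBA => (hex A hA B hB hBA.le (by omega)).2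
  rw [card_symmDiff]
  omega

end Knapsack

theorem Fin.cross_mul_le_of_le {n : ℕ} {w p : Fin n → ℕ} (hw : ∀ i, 0 < w i)
    (hsorted : ∀ i : Fin n, ∀ h : (i : ℕ) + 1 < n,
      p i * w ⟨(i : ℕ) + 1, h⟩ ≥ p ⟨(i : ℕ) + 1, h⟩ * w i)
    {i j : Fin n} (hij : i ≤ j) : p j * w i ≤ p i * w j := by
  obtain ⟨d, hd⟩ := Nat.exists_eq_add_of_le (Fin.le_def.1 hij)
  induction d generalizing j with
  | zero => rw [Fin.ext (hd.trans (add_zero _))]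
  | succ d ih =>
    have hmid : (i : ℕ) + d + 1 < n := hd ▸ j.isLt
    have hj : j = ⟨(i : ℕ) + d + 1, hmid⟩ := Fin.ext hd
    subst hj
    exact Nat.cross_mul_le_trans (hw _) (ih (Fin.le_def.2 (Nat.le_add_right _ _)) rfl)
      (hsorted ⟨(i : ℕ) + d, by omega⟩ hmid)

theorem Fin.exists_break_item {n : ℕ} {w : Fin n → ℕ} {W k : ℕ} (htotal : ∑ i, w i > W)
    (hkW : ∑ i ∈ univ.filter (fun i : Fin n => (i : ℕ) < k), w i ≤ W)
    (hkmax : ∀ k' : ℕ, k' ≤ n →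
      ∑ i ∈ univ.filter (fun i : Fin n => (i : ℕ) < k'), w i ≤ W → k' ≤ k) :
    ∃ hk : k < n, W < ∑ i ∈ univ.filter (fun i : Fin n => (i : ℕ) < k), w i + w ⟨k, hk⟩ := by
  have hk : k < n := by
    by_contra! hnk
    rw [filter_true_of_mem fun i _ => i.isLt.trans_le hnk] at hkW
    omega
  refine ⟨hk, not_le.1 fun hroom => ?_⟩
  have hsucc : univ.filter (fun i : Fin n => (i : ℕ) < k + 1) =
      insert ⟨k, hk⟩ (univ.filter fun i : Fin n => (i : ℕ) < k) := by
    ext i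
    simp only [mem_filter, mem_univ, true_and, mem_insert, Fin.ext_iff]
    omega
  have := hkmax (k + 1) hk (by rwa [hsucc, sum_insert (by simp), add_comm])
  omega

open Finset in
theorem knapsack_proximity_general
    (n : ℕ) (w p : Fin n → ℕ) (W wmax : ℕ)
    (hw : ∀ i, 1 ≤ w i ∧ w i ≤ wmax)
    (hsorted : ∀ i : Fin n, ∀ h : (i : ℕ) + 1 < n,
      p i * w ⟨(i : ℕ) + 1, h⟩ ≥ p ⟨(i : ℕ) + 1, h⟩ * w i)
    (htotal : ∑ i, w i > W)
    (k : ℕ) (hkW : ∑ i ∈ univ.filter (fun i : Fin n => (i : ℕ) < k), w i ≤ W)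
    (hkmax : ∀ k' : ℕ, k' ≤ n →
      ∑ i ∈ univ.filter (fun i : Fin n => (i : ℕ) < k'), w i ≤ W → k' ≤ k) :
    ∃ S : Finset (Fin n),
      (∑ i ∈ S, w i ≤ W) ∧
      (∀ T : Finset (Fin n), ∑ i ∈ T, w i ≤ W → ∑ i ∈ T, p i ≤ ∑ i ∈ S, p i) ∧
      (symmDiff (univ.filter (fun i : Fin n => (i : ℕ) < k)) S).card ≤ 2 * wmax := by
  obtain ⟨hk, hbreak⟩ := Fin.exists_break_item htotal hkW hkmax
  set I := univ.filter fun i : Fin n => (i : ℕ) < k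
  set b : Fin n := ⟨k, hk⟩
  obtain ⟨S, hSW, hSopt, hmin⟩ := Knapsack.exists_optimal_min_card_symmDiff w p W I
  have hwpos (i : Fin n) : 0 < w i := (hw i).1
  have hIS : ∀ a ∈ I \ S, p b * w a ≤ p a * w b := fun a ha =>
    Fin.cross_mul_le_of_le hwpos hsorted <| Fin.le_def.2 <| by
      simp only [I, mem_sdiff, mem_filter, mem_univ, true_and] at ha; exact ha.1.le
  have hSI : ∀ c ∈ S \ I, p c * w b ≤ p b * w c := fun c hc =>
    Fin.cross_mul_le_of_le hwpos hsorted <| Fin.le_def.2 <| by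
      simp only [I, mem_sdiff, mem_filter, mem_univ, true_and, not_lt] at hc; exact hc.2
  have hbreak' : W < ∑ i ∈ I, w i + wmax := hbreak.trans_le (Nat.add_le_add_left (hw b).2 _)
  refine ⟨S, hSW, hSopt, le_of_lt ?_⟩
  exact Knapsack.card_symmDiff_lt_of_no_exchange
    (fun A hA B hB => Knapsack.eq_empty_of_exchange hmin (hwpos b) hIS hSI hA hB)
    hSW hkW hbreak' fun i => (hw i).2

open Finset in
/-- **Proximity lemma (Polak–Rohwedder–Węgrzycki).**
For a 0-1 knapsack instance with items sorted by non-increasing efficiency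
(`p i / w i ≥ p (i+1) / w (i+1)`) whose total weight exceeds the capacity `W`,
if `Ĩ = {1, …, k}` is the maximal greedy prefix solution, then some optimal
solution `S*` satisfies `|Ĩ Δ S*| ≤ 2 ⬝ w_max`. -/
theorem knapsack_proximity
    (n : ℕ) (w p : Fin n → ℕ) (W wmax : ℕ) (hW : 1 ≤ W)
    (hw : ∀ i, 1 ≤ w i ∧ w i ≤ wmax) (hp : ∀ i, 1 ≤ p i)
    (hsorted : ∀ i : Fin n, ∀ h : (i : ℕ) + 1 < n,
      p i * w ⟨(i : ℕ) + 1, h⟩ ≥ p ⟨(i : ℕ) + 1, h⟩ * w i)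
    (htotal : ∑ i, w i > W)
    (k : ℕ) (hkW : ∑ i ∈ univ.filter (fun i : Fin n => (i : ℕ) < k), w i ≤ W)
    (hkmax : ∀ k' : ℕ, k' ≤ n →
      ∑ i ∈ univ.filter (fun i : Fin n => (i : ℕ) < k'), w i ≤ W → k' ≤ k) :
    ∃ S : Finset (Fin n),
      (∑ i ∈ S, w i ≤ W) ∧
      (∀ T : Finset (Fin n), ∑ i ∈ T, w i ≤ W → ∑ i ∈ T, p i ≤ ∑ i ∈ S, p i) ∧
      (symmDiff (univ.filter (fun i : Fin n => (i : ℕ) < k)) S).card ≤ 2 * wmax :=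
  knapsack_proximity_general n w p W wmax hw hsorted htotal k hkW hkmax
end

section
/- Let B and T be finite index sets, let w and p assign to each index a positive integer weight and a positive integer profit, and let c : B → ℕ. Suppose that for every j ∈ B and every i ∈ T we have p_j·w_i ≥ p_i·w_j (every index in B has efficiency at least that of every index in T), and suppose Σ_{j∈B} c_j·w_j = Σ_{i∈T} w_i. Then Σ_{j∈B} c_j·p_j ≥ Σ_{i∈T} p_i. -/
/-! Multiplying the efficiency inequalities `p i * w j ≤ p j * w i` by `c j` and summing over
`B × T` gives `(∑ p i) * (∑ c j * w j) ≤ (∑ c j * p j) * (∑ w i)`; since the two total weights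
agree and are positive, the common factor cancels. -/

theorem Finset.sum_mul_sum_le_sum_mul_sum_of_efficiency_le {ι R : Type*} [CommSemiring R]
    [PartialOrder R] [IsOrderedRing R] (B T : Finset ι) (w p c : ι → R)
    (hc : ∀ j ∈ B, 0 ≤ c j) (heff : ∀ j ∈ B, ∀ i ∈ T, p i * w j ≤ p j * w i) :
    (∑ i ∈ T, p i) * ∑ j ∈ B, c j * w j ≤ (∑ j ∈ B, c j * p j) * ∑ i ∈ T, w i := by
  rw [sum_mul_sum, sum_mul_sum, sum_comm]
  refine sum_le_sum fun j hj => sum_le_sum fun i hi => ?_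
  calc p i * (c j * w j) = c j * (p i * w j) := by ring
    _ ≤ c j * (p j * w i) := mul_le_mul_of_nonneg_left (heff j hj i hi) (hc j hj)
    _ = c j * p j * w i := by ring

open Finset in
theorem knapsack_exchange_general
    {ι : Type*} (B T : Finset ι) (w p : ι → ℕ) (c : ι → ℕ)
    (hw : ∀ i, 1 ≤ w i)
    (heff : ∀ j ∈ B, ∀ i ∈ T, p j * w i ≥ p i * w j)
    (hweight : ∑ j ∈ B, c j * w j = ∑ i ∈ T, w i) :
    ∑ j ∈ B, c j * p j ≥ ∑ i ∈ T, p i := by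
  rcases T.eq_empty_or_nonempty with rfl | hT
  · simp
  have hW : 0 < ∑ i ∈ T, w i := sum_pos (fun i _ => hw i) hT
  have key := sum_mul_sum_le_sum_mul_sum_of_efficiency_le B T w p c
    (fun j _ => Nat.zero_le (c j)) heff
  rw [hweight] at key
  exact Nat.le_of_mul_le_mul_right key hW

open Finset in
/-- **Exchange lemma.** Let `B` and `T` be finite sets of items with positive
integer weights `w` and profits `p`, and `c : B → ℕ`.  If every item of `B` is
at least as efficient as every item of `T` (`p j / w j ≥ p i / w i`, written
multiplicatively) and `∑_{j ∈ B} c j ⬝ w j = ∑_{i ∈ T} w i`, then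
`∑_{j ∈ B} c j ⬝ p j ≥ ∑_{i ∈ T} p i`. -/
theorem knapsack_exchange
    {ι : Type*} (B T : Finset ι) (w p : ι → ℕ) (c : ι → ℕ)
    (hw : ∀ i, 1 ≤ w i) (hp : ∀ i, 1 ≤ p i)
    (heff : ∀ j ∈ B, ∀ i ∈ T, p j * w i ≥ p i * w j)
    (hweight : ∑ j ∈ B, c j * w j = ∑ i ∈ T, w i) :
    ∑ j ∈ B, c j * p j ≥ ∑ i ∈ T, p i :=
  knapsack_exchange_general B T w p c hw heff hweight
end
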